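/- arXiv:2507.04672 — 7 statements merged into one kernel-verified Lean document; each statement's English description precedes it below -/
import Mathlib

section
/- Let N be a finite nonempty index set, c̄ : N → ℝ a reduced cost vector, and a : N → ℝ^m with a_j ≠ 0 for all j. Let j_d minimize c̄_j over N (Dantzig's rule) and j_l minimize c̄_j/‖a_j‖ over N (largest distance rule). Define β = (min_j ‖a_j‖)/(max_j ‖a_j‖) and suppose c̄_{j_d} < 0. Then c̄_{j_l} ≤ β · c̄_{j_d}. -/
open Finset

/-- The Euclidean norm of a vector in `Fin m → ℝ`. -/
noncomputable def euclNorm {m : ℕ} (v : Fin m → ℝ) : ℝ :=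
  Real.sqrt (∑ i, v i ^ 2)

lemma euclNorm_pos {m : ℕ} {v : Fin m → ℝ} (h : v ≠ 0) : 0 < euclNorm v := by
  unfold euclNorm
  apply Real.sqrt_pos.2
  obtain ⟨i, hi⟩ := Function.ne_iff.1 h
  exact Finset.sum_pos' (fun j _ => sq_nonneg _)
    ⟨i, Finset.mem_univ i, pow_two_pos_of_ne_zero hi⟩

/-- Let `N` be a finite nonempty index set, `c̄ : N → ℝ` a reduced cost vector and
`a : N → ℝ^m` with `a j ≠ 0` for all `j`.  If `j_d` minimizes `c̄_j` (Dantzig's rule),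
`j_l` minimizes `c̄_j / ‖a_j‖` (largest distance rule), `β = (min_j ‖a_j‖)/(max_j ‖a_j‖)`
and `c̄_{j_d} < 0`, then `c̄_{j_l} ≤ β · c̄_{j_d}`. -/
theorem largest_distance_vs_dantzig {m : ℕ} {ι : Type*} [Fintype ι] [Nonempty ι]
    (cbar : ι → ℝ) (a : ι → Fin m → ℝ) (ha : ∀ j, a j ≠ 0)
    (jd jl : ι)
    (hjd : ∀ j, cbar jd ≤ cbar j)
    (hjl : ∀ j, cbar jl / euclNorm (a jl) ≤ cbar j / euclNorm (a j))
    (hneg : cbar jd < 0) :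
    cbar jl ≤ ((Finset.univ.inf' Finset.univ_nonempty fun j => euclNorm (a j)) /
        (Finset.univ.sup' Finset.univ_nonempty fun j => euclNorm (a j))) * cbar jd := by
  set s := Finset.univ.inf' Finset.univ_nonempty fun j => euclNorm (a j) with hs_def
  set S := Finset.univ.sup' Finset.univ_nonempty fun j => euclNorm (a j) with hS_def
  have npos : ∀ j, 0 < euclNorm (a j) := fun j => euclNorm_pos (ha j)
  have hs_le : ∀ j, s ≤ euclNorm (a j) := fun j =>
    Finset.inf'_le _ (Finset.mem_univ j)
  have hS_ge : ∀ j, euclNorm (a j) ≤ S := fun j =>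
    Finset.le_sup' (fun j => euclNorm (a j)) (Finset.mem_univ j)
  have hs_pos : 0 < s := by
    rw [hs_def, Finset.lt_inf'_iff]
    exact fun j _ => npos j
  have hS_pos : 0 < S := lt_of_lt_of_le hs_pos (le_trans (hs_le jl) (hS_ge jl))
  -- key inequality from largest-distance rule applied at jd
  have key : cbar jl * euclNorm (a jd) ≤ cbar jd * euclNorm (a jl) :=
    (div_le_div_iff₀ (npos jl) (npos jd)).1 (hjl jd)
  have hjl0 : cbar jl < 0 := by
    have h1 : cbar jd * euclNorm (a jl) < 0 := mul_neg_of_neg_of_pos hneg (npos jl)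
    nlinarith [npos jd]
  -- step 1 : cbar jd * euclNorm (a jl) ≤ cbar jd * s
  have step1 : cbar jd * euclNorm (a jl) ≤ cbar jd * s := by
    nlinarith [hs_le jl]
  -- hence cbar jl * euclNorm (a jd) ≤ cbar jd * s
  have step2 : cbar jl * euclNorm (a jd) ≤ cbar jd * s := le_trans key step1
  -- step 3 : cbar jl * S ≤ cbar jl * euclNorm (a jd)
  have step3 : cbar jl * S ≤ cbar jl * euclNorm (a jd) := by
    nlinarith [hS_ge jd]
  have final : cbar jl * S ≤ cbar jd * s := le_trans step3 step2
  rw [div_mul_eq_mul_div, le_div_iff₀ hS_pos]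
  linarith [final]
end

section
/- Let x^t and x^{t+1} be consecutive iterates of the simplex method with the largest distance rule applied to min c^⊤x s.t. Ax = b, x ≥ 0, and suppose x^t ≠ x^{t+1}. Let δ and γ be the minimum and maximum positive components over all basic feasible solutions, β = (min_j ‖a_j‖)/(max_j ‖a_j‖), and z* the optimal value. Then c^⊤x^{t+1} − z* ≤ (1 − βδ/(mγ)) (c^⊤x^t − z*). -/
open Matrix Finset

/-! Write `c̄ = c - Aᵀy` for the reduced costs: they vanish on the basis, and `cᵀw = c̄ᵀw + yᵀb`
whenever `Aw = b`. Let `θ = -c̄_l/‖a_l‖ > 0` for the entering index `l`. Since `x' ≠ x`, the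
entering entry `x'_l` is positive, hence at least `δ`, and the pivot changes the objective by
`c̄_l x'_l = -θ ‖a_l‖ x'_l ≤ -θ (min_j ‖a_j‖) δ`. The largest distance rule gives
`-c̄_j ≤ θ ‖a_j‖` for every `j`, so for an optimal basic solution `v` (at most `m` nonzero entries,
each at most `γ`) the gap is `cᵀx - z* = -c̄ᵀv ≤ θ (max_j ‖a_j‖) m γ`. Eliminating `θ` between
the two bounds gives the factor `1 - βδ/(mγ)`. -/

/-- The Euclidean norm of the `j`-th column of `A`. -/
noncomputable def colNorm {m n : ℕ} (A : Matrix (Fin m) (Fin n) ℝ) (j : Fin n) : ℝ :=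
  Real.sqrt (∑ i, A i j ^ 2)

/-- `bas` selects an invertible `m × m` submatrix of `A` (a basis). -/
def IsBasis {m n : ℕ} (A : Matrix (Fin m) (Fin n) ℝ) (bas : Fin m → Fin n) : Prop :=
  Function.Injective bas ∧ IsUnit (A.submatrix id bas)

/-- `x` is a basic feasible solution of `A x = b`, `x ≥ 0`. -/
def IsBasicFeasible {m n : ℕ} (A : Matrix (Fin m) (Fin n) ℝ) (b : Fin m → ℝ)
    (x : Fin n → ℝ) : Prop :=
  (∃ bas : Fin m → Fin n, IsBasis A bas ∧ ∀ j, j ∉ Set.range bas → x j = 0) ∧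
    A *ᵥ x = b ∧ 0 ≤ x

theorem colNorm_pos {m n : ℕ} {A : Matrix (Fin m) (Fin n) ℝ} {j : Fin n}
    (h : ∃ i, A i j ≠ 0) : 0 < colNorm A j := by
  obtain ⟨i, hi⟩ := h
  exact Real.sqrt_pos.mpr <| (sq_pos_of_ne_zero hi).trans_le <|
    Finset.single_le_sum (f := fun k => A k j ^ 2) (fun k _ => sq_nonneg _) (Finset.mem_univ i)

section ReducedCost

variable {R ι κ : Type*} [CommRing R] [Fintype ι]

theorem dotProduct_eq_reducedCost_dotProduct_add [Fintype κ] (A : Matrix κ ι R) (c w : ι → R)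
    (y : κ → R) :
    c ⬝ᵥ w = (c - Aᵀ *ᵥ y) ⬝ᵥ w + y ⬝ᵥ (A *ᵥ w) := by
  rw [sub_dotProduct, mulVec_transpose, dotProduct_mulVec, sub_add_cancel]

theorem dotProduct_eq_zero_of_support {f w : ι → R} {S : Set ι} (hf : ∀ j ∈ S, f j = 0)
    (hw : ∀ j ∉ S, w j = 0) : f ⬝ᵥ w = 0 :=
  Finset.sum_eq_zero fun j _ => by
    by_cases hj : j ∈ S
    · rw [hf j hj, zero_mul]
    · rw [hw j hj, mul_zero]

theorem dotProduct_eq_mul_of_support_insert {f w : ι → R} {S : Set ι} (k : ι)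
    (hf : ∀ j ∈ S, f j = 0) (hw : ∀ j ∉ S, j ≠ k → w j = 0) : f ⬝ᵥ w = f k * w k :=
  Finset.sum_eq_single k (fun j _ hjk => by
    by_cases hj : j ∈ S
    · rw [hf j hj, zero_mul]
    · rw [hw j hj hjk, mul_zero]) (by simp)

theorem mulVec_eq_submatrix_mulVec_comp {ι' : Type*} [Fintype ι'] (A : Matrix κ ι R)
    {bas : ι' → ι} (hbas : Function.Injective bas) {u : ι → R}
    (hu : ∀ j ∉ Set.range bas, u j = 0) : A *ᵥ u = A.submatrix id bas *ᵥ (u ∘ bas) := by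
  funext i
  exact (Fintype.sum_of_injective bas hbas _ _ (fun j hj => by rw [hu j hj, mul_zero])
    fun _ => rfl).symm

end ReducedCost

section Simplex

variable {m n : ℕ} {A : Matrix (Fin m) (Fin n) ℝ} {bas : Fin m → Fin n}

theorem reducedCost_eq_zero_of_mem_range {c : Fin n → ℝ} {y : Fin m → ℝ}
    (hy : (A.submatrix id bas)ᵀ *ᵥ y = fun i => c (bas i)) :
    ∀ j ∈ Set.range bas, (c - Aᵀ *ᵥ y) j = 0 := by
  rintro _ ⟨i, rfl⟩
  exact sub_eq_zero.mpr (congrFun hy i).symm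

theorem IsBasis.eq_of_mulVec_eq (hbas : IsBasis A bas) {u w : Fin n → ℝ}
    (hu : ∀ j ∉ Set.range bas, u j = 0) (hw : ∀ j ∉ Set.range bas, w j = 0)
    (h : A *ᵥ u = A *ᵥ w) : u = w := by
  have hcomp : u ∘ bas = w ∘ bas := by
    apply mulVec_injective_iff_isUnit.mpr hbas.2
    rwa [← mulVec_eq_submatrix_mulVec_comp A hbas.1 hu,
      ← mulVec_eq_submatrix_mulVec_comp A hbas.1 hw]
  funext j
  by_cases hj : j ∈ Set.range bas
  · obtain ⟨i, rfl⟩ := hj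
    exact congrFun hcomp i
  · rw [hu j hj, hw j hj]

theorem IsBasis.pos_of_ne (hbas : IsBasis A bas) {x x' : Fin n → ℝ} {k : Fin n}
    (hx : ∀ j ∉ Set.range bas, x j = 0) (hx' : ∀ j ∉ Set.range bas, j ≠ k → x' j = 0)
    (hx'0 : 0 ≤ x' k) (hfeas : A *ᵥ x' = A *ᵥ x) (hne : x' ≠ x) : 0 < x' k := by
  refine hx'0.lt_of_ne fun hk => hne (hbas.eq_of_mulVec_eq (fun j hj => ?_) hx hfeas)
  by_cases hjk : j = k
  · exact hjk ▸ hk.symm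
  · exact hx' j hj hjk

theorem dotProduct_pivot {c x x' : Fin n → ℝ} {y : Fin m → ℝ} (k : Fin n)
    (hy : (A.submatrix id bas)ᵀ *ᵥ y = fun i => c (bas i))
    (hx : ∀ j ∉ Set.range bas, x j = 0) (hx' : ∀ j ∉ Set.range bas, j ≠ k → x' j = 0)
    (hfeas : A *ᵥ x' = A *ᵥ x) :
    c ⬝ᵥ x' = c ⬝ᵥ x + (c - Aᵀ *ᵥ y) k * x' k := by
  have hbasic := reducedCost_eq_zero_of_mem_range hy
  rw [dotProduct_eq_reducedCost_dotProduct_add A c x' y,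
    dotProduct_eq_reducedCost_dotProduct_add A c x y, hfeas,
    dotProduct_eq_mul_of_support_insert k hbasic hx', dotProduct_eq_zero_of_support hbasic hx]
  ring

theorem dotProduct_sub_eq_neg_reducedCost_dotProduct {c x w : Fin n → ℝ} {y : Fin m → ℝ}
    (hy : (A.submatrix id bas)ᵀ *ᵥ y = fun i => c (bas i))
    (hx : ∀ j ∉ Set.range bas, x j = 0) (hfeas : A *ᵥ x = A *ᵥ w) :
    c ⬝ᵥ x - c ⬝ᵥ w = -(c - Aᵀ *ᵥ y) ⬝ᵥ w := by
  rw [dotProduct_eq_reducedCost_dotProduct_add A c x y,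
    dotProduct_eq_reducedCost_dotProduct_add A c w y, hfeas,
    dotProduct_eq_zero_of_support (reducedCost_eq_zero_of_mem_range hy) hx, neg_dotProduct]
  ring

theorem IsBasicFeasible.sum_le {b : Fin m → ℝ} {v : Fin n → ℝ} {γ : ℝ}
    (hv : IsBasicFeasible A b v) (hγ : 0 ≤ γ) (hvγ : ∀ j, 0 < v j → v j ≤ γ) :
    ∑ j, v j ≤ m * γ := by
  obtain ⟨⟨bas, hbas, hzero⟩, -, hv0⟩ := hv
  calc ∑ j, v j = ∑ i, v (bas i) :=
        (Fintype.sum_of_injective bas hbas.1 _ _ hzero fun _ => rfl).symm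
    _ ≤ ∑ _i : Fin m, γ := Finset.sum_le_sum fun i _ =>
        (hv0 (bas i)).eq_or_lt.elim (fun h => h ▸ hγ) (hvγ _)
    _ = m * γ := by simp

end Simplex

theorem neg_le_div_mul_of_forall_div_le {ι : Type*} {d N : ι → ℝ} {S : Set ι} {k : ι}
    (hS : ∀ j ∈ S, d j = 0) (hmin : ∀ j ∉ S, d k / N k ≤ d j / N j) (hN : ∀ j, 0 < N j)
    (hk : d k < 0) (j : ι) : -d j ≤ -d k / N k * N j := by
  by_cases hj : j ∈ S
  · rw [hS j hj, neg_zero]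
    exact mul_nonneg (div_nonneg (neg_nonneg.mpr hk.le) (hN k).le) (hN j).le
  · rw [neg_div, neg_mul, neg_le_neg_iff, ← le_div_iff₀ (hN j)]
    exact hmin j hj

theorem dotProduct_le_mul_sum {ι : Type*} [Fintype ι] {d N v : ι → ℝ} {θ M : ℝ} (hθ : 0 ≤ θ)
    (hd : ∀ j, d j ≤ θ * N j) (hN : ∀ j, N j ≤ M) (hv : 0 ≤ v) :
    d ⬝ᵥ v ≤ θ * M * ∑ j, v j := by
  rw [Finset.mul_sum]
  exact Finset.sum_le_sum fun j _ => mul_le_mul_of_nonneg_right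
    ((hd j).trans (mul_le_mul_of_nonneg_left (hN j) hθ)) (hv j)

theorem mul_le_neg_div_mul_mul {d N μ δ t : ℝ} (hd : d ≤ 0) (hN : 0 < N) (hμ : μ ≤ N)
    (hδ : 0 ≤ δ) (ht : δ ≤ t) : d * t ≤ -(-d / N * μ * δ) := by
  have hdN : 0 ≤ -d / N := div_nonneg (neg_nonneg.mpr hd) hN.le
  have h : -d / N * μ * δ ≤ -d / N * N * t :=
    mul_le_mul (mul_le_mul_of_nonneg_left hμ hdN) ht hδ (mul_nonneg hdN hN.le)
  rw [div_mul_cancel₀ _ hN.ne'] at h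
  linarith

theorem le_one_sub_div_mul_of_le_sub {G G' θ μ M K δ : ℝ} (hθ : 0 ≤ θ) (hM : 0 ≤ M)
    (hK : 0 ≤ K) (hμ : 0 ≤ μ) (hδ : 0 ≤ δ) (hG : G ≤ θ * M * K) (hG' : G' ≤ G - θ * μ * δ) :
    G' ≤ (1 - μ / M * δ / K) * G := by
  have hratio : G / (M * K) ≤ θ := div_le_of_le_mul₀ (mul_nonneg hM hK) hθ (by linarith)
  calc G' ≤ G - θ * μ * δ := hG'
    _ ≤ G - G / (M * K) * μ * δ := by gcongr
    _ = (1 - μ / M * δ / K) * G := by ring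

theorem largest_distance_gap_decrease_general {m n : ℕ} [NeZero n]
    (A : Matrix (Fin m) (Fin n) ℝ) (b : Fin m → ℝ) (c : Fin n → ℝ)
    (hcols : ∀ j : Fin n, ∃ i : Fin m, A i j ≠ 0)
    (bas : Fin m → Fin n) (hbas : IsBasis A bas)
    (x : Fin n → ℝ)
    (hxzero : ∀ j, j ∉ Set.range bas → x j = 0)
    (hxfeas : A *ᵥ x = b)
    (y : Fin m → ℝ)
    (hy : (A.submatrix id bas)ᵀ *ᵥ y = fun i => c (bas i))
    (jl : Fin n)
    (hsomeneg : ∃ j, j ∉ Set.range bas ∧ c j - (Aᵀ *ᵥ y) j < 0)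
    (hmin : ∀ j, j ∉ Set.range bas →
      (c jl - (Aᵀ *ᵥ y) jl) / colNorm A jl ≤ (c j - (Aᵀ *ᵥ y) j) / colNorm A j)
    (x' : Fin n → ℝ)
    (hx'zero : ∀ j, j ∉ Set.range bas → j ≠ jl → x' j = 0)
    (hx'bfs : IsBasicFeasible A b x')
    (hne : x' ≠ x)
    (δ γ : ℝ) (hδ : 0 < δ)
    (hδγ : ∀ v, IsBasicFeasible A b v → ∀ j, 0 < v j → δ ≤ v j ∧ v j ≤ γ)
    (zstar : ℝ)
    (hzatt : ∃ v, IsBasicFeasible A b v ∧ c ⬝ᵥ v = zstar) :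
    c ⬝ᵥ x' - zstar ≤
      (1 - ((Finset.univ.inf' Finset.univ_nonempty fun j => colNorm A j) /
          (Finset.univ.sup' Finset.univ_nonempty fun j => colNorm A j)) * δ / (m * γ)) *
        (c ⬝ᵥ x - zstar) := by
  set cbar := c - Aᵀ *ᵥ y
  have hN : ∀ j, 0 < colNorm A j := fun j => colNorm_pos (hcols j)
  have hNle : ∀ j, colNorm A j ≤ univ.sup' univ_nonempty fun j => colNorm A j :=
    fun j => le_sup' _ (mem_univ j)
  have hfeas : A *ᵥ x' = A *ᵥ x := hx'bfs.2.1.trans hxfeas.symm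
  obtain ⟨hδx', hx'γ⟩ :=
    hδγ x' hx'bfs jl (hbas.pos_of_ne hxzero hx'zero (hx'bfs.2.2 jl) hfeas hne)
  obtain ⟨j0, hj0, hj0neg⟩ := hsomeneg
  have hneg : cbar jl < 0 := neg_of_div_neg_left
    ((hmin j0 hj0).trans_lt (div_neg_of_neg_of_pos hj0neg (hN j0))) (hN jl).le
  set θ := -cbar jl / colNorm A jl
  have hθ0 : 0 ≤ θ := div_nonneg (neg_nonneg.mpr hneg.le) (hN jl).le
  have hγ : 0 ≤ γ := hδ.le.trans (hδx'.trans hx'γ)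
  obtain ⟨v, hv, rfl⟩ := hzatt
  refine le_one_sub_div_mul_of_le_sub hθ0 ((hN jl).le.trans (hNle jl))
    (mul_nonneg m.cast_nonneg hγ) (le_inf' _ _ fun j _ => (hN j).le) hδ.le ?_ ?_
  · rw [dotProduct_sub_eq_neg_reducedCost_dotProduct hy hxzero (hxfeas.trans hv.2.1.symm)]
    calc -cbar ⬝ᵥ v ≤ θ * _ * ∑ j, v j := dotProduct_le_mul_sum hθ0
          (neg_le_div_mul_of_forall_div_le (reducedCost_eq_zero_of_mem_range hy) hmin hN hneg)
          hNle hv.2.2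
      _ ≤ _ := mul_le_mul_of_nonneg_left (hv.sum_le hγ fun j hj => (hδγ v hv j hj).2)
          (mul_nonneg hθ0 ((hN jl).le.trans (hNle jl)))
  · rw [dotProduct_pivot jl hy hxzero hx'zero hfeas]
    linarith [mul_le_neg_div_mul_mul hneg.le (hN jl) (inf'_le _ (mem_univ jl)) hδ.le hδx']

/-- Lemma 2 of the paper: one pivot of the simplex method with the largest distance rule,
moving from BFS `x` (basis `bas`) to a different feasible solution `x'`, shrinks the
optimality gap by the factor `1 − βδ/(mγ)`, where `δ`/`γ` are the min/max positive
components over all BFSs, `β = (min_j ‖a_j‖)/(max_j ‖a_j‖)`, and `z*` is the optimal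
value (attained by primal and dual optimal basic solutions). -/
theorem largest_distance_gap_decrease {m n : ℕ} [NeZero n] (hm : 0 < m) (hmn : m < n)
    (A : Matrix (Fin m) (Fin n) ℝ) (b : Fin m → ℝ) (c : Fin n → ℝ)
    (hcols : ∀ j : Fin n, ∃ i : Fin m, A i j ≠ 0)
    (bas : Fin m → Fin n) (hbas : IsBasis A bas)
    (x : Fin n → ℝ)
    (hxzero : ∀ j, j ∉ Set.range bas → x j = 0)
    (hxfeas : A *ᵥ x = b) (hx0 : 0 ≤ x)
    (y : Fin m → ℝ)
    (hy : (A.submatrix id bas)ᵀ *ᵥ y = fun i => c (bas i))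
    (jl : Fin n) (hjl : jl ∉ Set.range bas)
    (hsomeneg : ∃ j, j ∉ Set.range bas ∧ c j - (Aᵀ *ᵥ y) j < 0)
    (hmin : ∀ j, j ∉ Set.range bas →
      (c jl - (Aᵀ *ᵥ y) jl) / colNorm A jl ≤ (c j - (Aᵀ *ᵥ y) j) / colNorm A j)
    (x' : Fin n → ℝ)
    (hx'feas : A *ᵥ x' = b) (hx'0 : 0 ≤ x')
    (hx'zero : ∀ j, j ∉ Set.range bas → j ≠ jl → x' j = 0)
    (hx'bfs : IsBasicFeasible A b x')
    (hne : x' ≠ x)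
    (δ γ : ℝ) (hδ : 0 < δ)
    (hδγ : ∀ v, IsBasicFeasible A b v → ∀ j, 0 < v j → δ ≤ v j ∧ v j ≤ γ)
    (zstar : ℝ)
    (hzatt : ∃ v, IsBasicFeasible A b v ∧ c ⬝ᵥ v = zstar)
    (hzopt : ∀ v, A *ᵥ v = b → 0 ≤ v → zstar ≤ c ⬝ᵥ v)
    (hdual : ∃ (y' : Fin m → ℝ) (s : Fin n → ℝ),
      Aᵀ *ᵥ y' + s = c ∧ 0 ≤ s ∧ b ⬝ᵥ y' = zstar) :
    c ⬝ᵥ x' - zstar ≤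
      (1 - ((Finset.univ.inf' Finset.univ_nonempty fun j => colNorm A j) /
          (Finset.univ.sup' Finset.univ_nonempty fun j => colNorm A j)) * δ / (m * γ)) *
        (c ⬝ᵥ x - zstar) :=
  largest_distance_gap_decrease_general A b c hcols bas hbas x hxzero hxfeas y hy jl hsomeneg hmin
    x' hx'zero hx'bfs hne δ γ hδ hδγ zstar hzatt
end

section
/- Suppose each iteration of the simplex method with the largest distance rule that changes the basic feasible solution decreases the optimality gap by the factor (1 − βδ/(mγ)). Let x^0 be the initial (non-optimal) basic feasible solution, z* the optimal value, and x̄ a basic feasible solution with the second smallest objective value. Then the method generates at most ⌈(mγ/(βδ)) · log((c^⊤x^0 − z*)/(c^⊤x̄ − z*))⌉ different basic feasible solutions before reaching an optimal solution. -/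
open Matrix Finset

/-- Theorem 1 of the paper: if every simplex iteration with the largest distance rule
that changes the BFS shrinks the optimality gap by the factor `1 − βδ/(mγ)`, then the
number of different non-optimal basic feasible solutions generated before reaching an
optimal solution is at most `⌈(mγ/(βδ)) log((c⬝x⁰ − z*)/(c⬝x̄ − z*))⌉`, where `x̄` is a
BFS with the second smallest objective value (`⌈r⌉` denotes the smallest integer
greater than `r`, as in the paper). -/
theorem largest_distance_bound_with_objective {m n : ℕ} [NeZero n]
    (hm : 0 < m) (hmn : m < n)
    (A : Matrix (Fin m) (Fin n) ℝ) (b : Fin m → ℝ) (c : Fin n → ℝ)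
    (hcols : ∀ j : Fin n, ∃ i : Fin m, A i j ≠ 0)
    (β δ γ : ℝ)
    (hβ : β = (Finset.univ.inf' Finset.univ_nonempty fun j => colNorm A j) /
      (Finset.univ.sup' Finset.univ_nonempty fun j => colNorm A j))
    (hδ : 0 < δ)
    (hδγ : ∀ v, IsBasicFeasible A b v → ∀ j, 0 < v j → δ ≤ v j ∧ v j ≤ γ)
    (zstar : ℝ)
    (hzatt : ∃ v, IsBasicFeasible A b v ∧ c ⬝ᵥ v = zstar)
    (hzopt : ∀ v, A *ᵥ v = b → 0 ≤ v → zstar ≤ c ⬝ᵥ v)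
    (x : ℕ → Fin n → ℝ)
    (hBFS : ∀ t, IsBasicFeasible A b (x t))
    (hdec : ∀ t, x (t + 1) ≠ x t →
      c ⬝ᵥ x (t + 1) - zstar ≤ (1 - β * δ / (m * γ)) * (c ⬝ᵥ x t - zstar))
    (hx0 : zstar < c ⬝ᵥ x 0)
    (xbar : Fin n → ℝ) (hxbar : IsBasicFeasible A b xbar)
    (hxbar1 : zstar < c ⬝ᵥ xbar)
    (hsecond : ∀ v, IsBasicFeasible A b v → c ⬝ᵥ v < c ⬝ᵥ xbar → c ⬝ᵥ v = zstar) :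
    Set.ncard {v : Fin n → ℝ | (∃ t, x t = v) ∧ zstar < c ⬝ᵥ v} ≤
      ⌊(m * γ / (β * δ)) *
        Real.log ((c ⬝ᵥ x 0 - zstar) / (c ⬝ᵥ xbar - zstar))⌋₊ + 1 := by
  classical
  set S := {v : Fin n → ℝ | (∃ t, x t = v) ∧ zstar < c ⬝ᵥ v} with hS_def
  by_cases hSfin : S.Finite
  swap
  · rw [Set.Infinite.ncard (by simpa using hSfin)]
    exact Nat.zero_le _
  by_cases hγδ : δ ≤ γ
  swap
  · -- degenerate case: every BFS is zero, so S has at most one element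
    have hsub : S ⊆ {(0 : Fin n → ℝ)} := by
      intro v hv
      obtain ⟨⟨t, rfl⟩, -⟩ := hv
      have hB := hBFS t
      have : x t = 0 := by
        funext j
        by_contra hj
        have hpos : 0 < x t j := lt_of_le_of_ne (hB.2.2 j) (Ne.symm hj)
        obtain ⟨h1, h2⟩ := hδγ (x t) hB j hpos
        exact hγδ (le_trans h1 h2)
      simp [this]
    calc S.ncard ≤ ({(0 : Fin n → ℝ)} : Set (Fin n → ℝ)).ncard :=
          Set.ncard_le_ncard hsub (Set.finite_singleton _)
      _ = 1 := Set.ncard_singleton _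
      _ ≤ _ := Nat.le_add_left 1 _
  -- main case
  have hγ : 0 < γ := lt_of_lt_of_le hδ hγδ
  have hm1 : (1 : ℝ) ≤ (m : ℝ) := by exact_mod_cast hm
  have hmγ : 0 < (m : ℝ) * γ := by nlinarith
  have hne : Nonempty (Fin n) := ⟨⟨0, Nat.pos_of_ne_zero (NeZero.ne n)⟩⟩
  have hcolpos : ∀ j, 0 < colNorm A j := by
    intro j
    obtain ⟨i, hi⟩ := hcols j
    have hsum : 0 < ∑ i, A i j ^ 2 :=
      Finset.sum_pos' (fun i _ => sq_nonneg _) ⟨i, Finset.mem_univ i, by positivity⟩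
    exact Real.sqrt_pos.2 hsum
  have hinfpos : 0 < Finset.univ.inf' Finset.univ_nonempty fun j => colNorm A j := by
    obtain ⟨j, -, hj⟩ := Finset.exists_mem_eq_inf' Finset.univ_nonempty
      (fun j => colNorm A j)
    rw [hj]; exact hcolpos j
  obtain ⟨j0⟩ := hne
  have hsuppos : 0 < Finset.univ.sup' Finset.univ_nonempty fun j => colNorm A j :=
    lt_of_lt_of_le (hcolpos j0) (Finset.le_sup' _ (Finset.mem_univ j0))
  have hinfsup : (Finset.univ.inf' Finset.univ_nonempty fun j => colNorm A j) ≤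
      Finset.univ.sup' Finset.univ_nonempty fun j => colNorm A j :=
    le_trans (Finset.inf'_le _ (Finset.mem_univ j0)) (Finset.le_sup' _ (Finset.mem_univ j0))
  have hβpos : 0 < β := by rw [hβ]; positivity
  have hβ1 : β ≤ 1 := by rw [hβ]; exact (div_le_one hsuppos).2 hinfsup
  set ρ : ℝ := 1 - β * δ / ((m : ℝ) * γ) with hρdef
  have hq : 0 < β * δ / ((m : ℝ) * γ) := by positivity
  have hρ1 : ρ < 1 := by rw [hρdef]; linarith
  have hρ0 : 0 ≤ ρ := by
    rw [hρdef]
    have h1 : β * δ ≤ (m : ℝ) * γ := by nlinarith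
    have := (div_le_one hmγ).2 h1
    linarith
  -- the gap is nonnegative and nonincreasing
  have hgnn : ∀ t, 0 ≤ c ⬝ᵥ x t - zstar := fun t =>
    sub_nonneg.2 (hzopt (x t) (hBFS t).2.1 (hBFS t).2.2)
  have hstep : ∀ t, c ⬝ᵥ x (t + 1) - zstar ≤ c ⬝ᵥ x t - zstar := by
    intro t
    by_cases hxx : x (t + 1) = x t
    · rw [hxx]
    · calc c ⬝ᵥ x (t + 1) - zstar ≤ ρ * (c ⬝ᵥ x t - zstar) := hdec t hxx
        _ ≤ 1 * (c ⬝ᵥ x t - zstar) := mul_le_mul_of_nonneg_right hρ1.le (hgnn t)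
        _ = c ⬝ᵥ x t - zstar := one_mul _
  have hmono : ∀ s t : ℕ, s ≤ t → c ⬝ᵥ x t - zstar ≤ c ⬝ᵥ x s - zstar := by
    intro s t hst
    induction t with
    | zero => simp_all
    | succ t ih =>
      rcases Nat.lt_or_ge s (t + 1) with h | h
      · exact le_trans (hstep t) (ih (Nat.lt_succ_iff.1 h))
      · have : s = t + 1 := le_antisymm hst h
        rw [this]
  set F : ℕ → Finset (Fin n → ℝ) :=
    fun t => ((Finset.range (t + 1)).image x).filter (fun v => zstar < c ⬝ᵥ v) with hFdef
  have hFmem : ∀ t s, s ≤ t → zstar < c ⬝ᵥ x s → x s ∈ F t := by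
    intro t s hst hs
    simp only [hFdef, Finset.mem_filter, Finset.mem_image, Finset.mem_range]
    exact ⟨⟨s, by omega, rfl⟩, hs⟩
  have hg0 : 0 < c ⬝ᵥ x 0 - zstar := sub_pos.2 hx0
  -- key claim by induction
  have claim : ∀ t, zstar < c ⬝ᵥ x t →
      c ⬝ᵥ x t - zstar ≤ ρ ^ ((F t).card - 1) * (c ⬝ᵥ x 0 - zstar) := by
    intro t
    induction t with
    | zero =>
      intro h0
      have hsub : F 0 ⊆ {x 0} := by
        intro v hv
        simp only [hFdef, Finset.mem_filter, Finset.mem_image, Finset.mem_range] at hv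
        obtain ⟨⟨s, hs, rfl⟩, -⟩ := hv
        have : s = 0 := by omega
        simp [this]
      have hc : (F 0).card ≤ 1 := le_trans (Finset.card_le_card hsub) (by simp)
      rw [show (F 0).card - 1 = 0 by omega, pow_zero, one_mul]
    | succ t ih =>
      intro h1
      have hgt : zstar < c ⬝ᵥ x t := by linarith [hstep t]
      have iht := ih hgt
      by_cases hxx : x (t + 1) = x t
      · have hFeq : F (t + 1) = F t := by
          apply Finset.Subset.antisymm
          · intro v hv
            simp only [hFdef, Finset.mem_filter, Finset.mem_image, Finset.mem_range]
              at hv ⊢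
            obtain ⟨⟨s, hs, rfl⟩, hvpos⟩ := hv
            rcases Nat.lt_or_ge s (t + 1) with h | h
            · exact ⟨⟨s, h, rfl⟩, hvpos⟩
            · have hs' : s = t + 1 := by omega
              refine ⟨⟨t, by omega, ?_⟩, hvpos⟩
              rw [hs', hxx]
          · intro v hv
            simp only [hFdef, Finset.mem_filter, Finset.mem_image, Finset.mem_range]
              at hv ⊢
            obtain ⟨⟨s, hs, rfl⟩, hvpos⟩ := hv
            exact ⟨⟨s, by omega, rfl⟩, hvpos⟩
        rw [hFeq, hxx]
        exact iht
      · have hcard : (F (t + 1)).card ≤ (F t).card + 1 := by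
          have hsub : F (t + 1) ⊆ insert (x (t + 1)) (F t) := by
            intro v hv
            simp only [hFdef, Finset.mem_filter, Finset.mem_image, Finset.mem_range]
              at hv
            obtain ⟨⟨s, hs, rfl⟩, hvpos⟩ := hv
            rcases Nat.lt_or_ge s (t + 1) with h | h
            · exact Finset.mem_insert_of_mem (hFmem t s (by omega) hvpos)
            · have hs' : s = t + 1 := by omega
              rw [hs']
              exact Finset.mem_insert_self _ _
          exact le_trans (Finset.card_le_card hsub) (Finset.card_insert_le _ _)
        have hone : 1 ≤ (F t).card := Finset.card_pos.2 ⟨x t, hFmem t t le_rfl hgt⟩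
        calc c ⬝ᵥ x (t + 1) - zstar ≤ ρ * (c ⬝ᵥ x t - zstar) := hdec t hxx
          _ ≤ ρ * (ρ ^ ((F t).card - 1) * (c ⬝ᵥ x 0 - zstar)) :=
              mul_le_mul_of_nonneg_left iht hρ0
          _ = ρ ^ ((F t).card - 1 + 1) * (c ⬝ᵥ x 0 - zstar) := by ring
          _ = ρ ^ (F t).card * (c ⬝ᵥ x 0 - zstar) := by rw [Nat.sub_add_cancel hone]
          _ ≤ ρ ^ ((F (t + 1)).card - 1) * (c ⬝ᵥ x 0 - zstar) :=
              mul_le_mul_of_nonneg_right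
                (pow_le_pow_of_le_one hρ0 hρ1.le (by omega)) hg0.le
  -- assemble
  have hNcard : S.ncard = hSfin.toFinset.card := Set.ncard_eq_toFinset_card S hSfin
  set N := S.ncard with hNdef
  rcases Nat.lt_or_ge N 2 with hN2 | hN2
  · omega
  -- choose first occurrence times
  have hτ : ∀ v ∈ hSfin.toFinset, ∃ t, x t = v := by
    intro v hv
    rw [Set.Finite.mem_toFinset] at hv
    exact hv.1
  set τ : (Fin n → ℝ) → ℕ := fun v => if h : ∃ t, x t = v then Nat.find h else 0 with hτdef
  have hτspec : ∀ v ∈ hSfin.toFinset, x (τ v) = v := by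
    intro v hv
    have hex : ∃ t, x t = v := hτ v hv
    simp only [hτdef, dif_pos hex]
    exact Nat.find_spec hex
  have hSne : hSfin.toFinset.Nonempty := by
    rw [← Finset.card_pos, ← hNcard]
    omega
  set T := hSfin.toFinset.sup τ with hTdef
  obtain ⟨v0, hv0S, hv0⟩ := Finset.exists_mem_eq_sup hSfin.toFinset hSne τ
  have hxT : x T = v0 := by rw [hTdef, hv0]; exact hτspec v0 hv0S
  have hv0mem : v0 ∈ S := (Set.Finite.mem_toFinset _).1 hv0S
  have hTnonopt : zstar < c ⬝ᵥ x T := by rw [hxT]; exact hv0mem.2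
  -- every element of S is in F T
  have hST : hSfin.toFinset ⊆ F T := by
    intro v hv
    have hvS : v ∈ S := (Set.Finite.mem_toFinset _).1 hv
    have hle : τ v ≤ T := Finset.le_sup hv
    have := hFmem T (τ v) hle (by rw [hτspec v hv]; exact hvS.2)
    rwa [hτspec v hv] at this
  have hNF : N ≤ (F T).card := by
    rw [hNcard]
    exact Finset.card_le_card hST
  -- lower bound on the gap at time T
  have hgapbar : c ⬝ᵥ xbar - zstar ≤ c ⬝ᵥ x T - zstar := by
    have hBv0 : IsBasicFeasible A b v0 := by
      obtain ⟨t, ht⟩ := hv0mem.1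
      rw [← ht]; exact hBFS t
    have : c ⬝ᵥ xbar ≤ c ⬝ᵥ v0 := by
      by_contra h
      push_neg at h
      exact absurd (hsecond v0 hBv0 h) (ne_of_gt hv0mem.2)
    rw [hxT]
    linarith
  have hmain : c ⬝ᵥ xbar - zstar ≤ ρ ^ (N - 1) * (c ⬝ᵥ x 0 - zstar) := by
    calc c ⬝ᵥ xbar - zstar ≤ c ⬝ᵥ x T - zstar := hgapbar
      _ ≤ ρ ^ ((F T).card - 1) * (c ⬝ᵥ x 0 - zstar) := claim T hTnonopt
      _ ≤ ρ ^ (N - 1) * (c ⬝ᵥ x 0 - zstar) :=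
          mul_le_mul_of_nonneg_right
            (pow_le_pow_of_le_one hρ0 hρ1.le (by omega)) hg0.le
  have hgb : 0 < c ⬝ᵥ xbar - zstar := sub_pos.2 hxbar1
  have hρpos : 0 < ρ := by
    rcases hρ0.eq_or_lt with h | h
    · exfalso
      rw [← h, zero_pow (by omega : N - 1 ≠ 0), zero_mul] at hmain
      linarith
    · exact h
  -- take logarithms
  have hpow : (c ⬝ᵥ xbar - zstar) / (c ⬝ᵥ x 0 - zstar) ≤ ρ ^ (N - 1) :=
    (div_le_iff₀ hg0).2 hmain
  have hlog1 : Real.log ((c ⬝ᵥ xbar - zstar) / (c ⬝ᵥ x 0 - zstar)) ≤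
      ((N - 1 : ℕ) : ℝ) * Real.log ρ := by
    have := Real.log_le_log (div_pos hgb hg0) hpow
    rwa [Real.log_pow] at this
  have hlogflip : Real.log ((c ⬝ᵥ xbar - zstar) / (c ⬝ᵥ x 0 - zstar)) =
      - Real.log ((c ⬝ᵥ x 0 - zstar) / (c ⬝ᵥ xbar - zstar)) := by
    rw [Real.log_div (ne_of_gt hgb) (ne_of_gt hg0),
      Real.log_div (ne_of_gt hg0) (ne_of_gt hgb)]
    ring
  have hlogρ : Real.log ρ ≤ -(β * δ / ((m : ℝ) * γ)) := by
    have := Real.log_le_sub_one_of_pos hρpos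
    rw [hρdef] at this ⊢
    linarith
  have hk0 : (0 : ℝ) ≤ ((N - 1 : ℕ) : ℝ) := Nat.cast_nonneg _
  have hmul : ((N - 1 : ℕ) : ℝ) * Real.log ρ ≤
      ((N - 1 : ℕ) : ℝ) * (-(β * δ / ((m : ℝ) * γ))) :=
    mul_le_mul_of_nonneg_left hlogρ hk0
  have hfinal : ((N - 1 : ℕ) : ℝ) * (β * δ / ((m : ℝ) * γ)) ≤
      Real.log ((c ⬝ᵥ x 0 - zstar) / (c ⬝ᵥ xbar - zstar)) := by
    rw [hlogflip] at hlog1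
    nlinarith
  have hcast : ((N - 1 : ℕ) : ℝ) ≤ ((m : ℝ) * γ / (β * δ)) *
      Real.log ((c ⬝ᵥ x 0 - zstar) / (c ⬝ᵥ xbar - zstar)) := by
    have h2 : ((N - 1 : ℕ) : ℝ) ≤
        Real.log ((c ⬝ᵥ x 0 - zstar) / (c ⬝ᵥ xbar - zstar)) / (β * δ / ((m : ℝ) * γ)) :=
      (le_div_iff₀ hq).2 hfinal
    have h3 : Real.log ((c ⬝ᵥ x 0 - zstar) / (c ⬝ᵥ xbar - zstar)) /
        (β * δ / ((m : ℝ) * γ)) = ((m : ℝ) * γ / (β * δ)) *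
        Real.log ((c ⬝ᵥ x 0 - zstar) / (c ⬝ᵥ xbar - zstar)) := by
      rw [div_div_eq_mul_div]
      ring
    rwa [h3] at h2
  have hfloor : N - 1 ≤ ⌊((m : ℝ) * γ / (β * δ)) *
      Real.log ((c ⬝ᵥ x 0 - zstar) / (c ⬝ᵥ xbar - zstar))⌋₊ := Nat.le_floor hcast
  omega
end

section
/- Let x^t be a non-optimal basic feasible solution of min c^⊤x s.t. Ax = b, x ≥ 0 with basis B^t, let z* be the optimal value, and let (y*, s*) be an optimal basic solution of the dual. Then there exists an index j̄ ∈ B^t with x^t_{j̄} > 0 and s*_{j̄} ≥ (c^⊤x^t − z*)/(m x^t_{j̄}). -/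
open Matrix

/-- Existence part of Lemma 3 (Kitahara–Mizuno): if `x` is a non-optimal basic feasible
solution with basis `bas`, `z*` is the optimal value and `(y*, s*)` is an optimal basic
solution of the dual, then some basic index `j̄ = bas i` satisfies `x_{j̄} > 0` and
`s*_{j̄} ≥ (c⬝x − z*)/(m x_{j̄})`. -/
theorem dual_slack_lower_bound {m n : ℕ} (hm : 0 < m)
    (A : Matrix (Fin m) (Fin n) ℝ) (b : Fin m → ℝ) (c : Fin n → ℝ)
    (bas : Fin m → Fin n) (hbas : IsBasis A bas)
    (x : Fin n → ℝ)
    (hxzero : ∀ j, j ∉ Set.range bas → x j = 0)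
    (hxfeas : A *ᵥ x = b) (hx0 : 0 ≤ x)
    (zstar : ℝ)
    (hzopt : ∀ v, A *ᵥ v = b → 0 ≤ v → zstar ≤ c ⬝ᵥ v)
    (y : Fin m → ℝ) (s : Fin n → ℝ)
    (hdual : Aᵀ *ᵥ y + s = c) (hs : 0 ≤ s) (hstrong : b ⬝ᵥ y = zstar)
    (hnonopt : zstar < c ⬝ᵥ x) :
    ∃ i : Fin m, 0 < x (bas i) ∧
      s (bas i) ≥ (c ⬝ᵥ x - zstar) / (m * x (bas i)) := by
  set gap := c ⬝ᵥ x - zstar with hgap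
  have hgap_pos : 0 < gap := by simp [hgap]; linarith
  -- gap = s ⬝ᵥ x
  have key : gap = s ⬝ᵥ x := by
    have h1 : c ⬝ᵥ x = (Aᵀ *ᵥ y) ⬝ᵥ x + s ⬝ᵥ x := by
      rw [← add_dotProduct, hdual]
    have h2 : (Aᵀ *ᵥ y) ⬝ᵥ x = b ⬝ᵥ y := by
      rw [← hxfeas]
      simp [dotProduct, mulVec, Finset.mul_sum, Finset.sum_mul]
      rw [Finset.sum_comm]
      apply Finset.sum_congr rfl; intro i _
      apply Finset.sum_congr rfl; intro j _
      ring
    rw [hgap, h1, h2, hstrong]; ring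
  -- s ⬝ᵥ x = ∑ i, s (bas i) * x (bas i)
  have hsum : s ⬝ᵥ x = ∑ i : Fin m, s (bas i) * x (bas i) := by
    rw [dotProduct]
    have him : ∑ j ∈ Finset.image bas Finset.univ, s j * x j
        = ∑ i : Fin m, s (bas i) * x (bas i) :=
      Finset.sum_image (fun a _ b _ h => hbas.1 h)
    rw [← him]
    symm
    apply Finset.sum_subset (Finset.subset_univ _)
    intro j _ hj
    have : j ∉ Set.range bas := by
      simp only [Finset.mem_image, Finset.mem_univ, true_and] at hj
      rintro ⟨i, rfl⟩; exact hj ⟨i, rfl⟩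
    rw [hxzero j this, mul_zero]
  -- pigeonhole
  have : ∃ i : Fin m, gap / m ≤ s (bas i) * x (bas i) := by
    by_contra h
    push_neg at h
    have : ∑ i : Fin m, s (bas i) * x (bas i) < ∑ _i : Fin m, gap / m :=
      Finset.sum_lt_sum_of_nonempty (Finset.univ_nonempty_iff.mpr ⟨⟨0, hm⟩⟩)
        (fun i _ => h i)
    rw [← hsum, ← key] at this
    simp at this
    rw [mul_div_cancel₀ _ (by positivity : (m : ℝ) ≠ 0)] at this
    linarith
  obtain ⟨i, hi⟩ := this
  have hgm : 0 < gap / m := by positivity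
  have hxi : 0 < x (bas i) := by
    have h0 : (0:ℝ) ≤ x (bas i) := hx0 (bas i)
    rcases lt_or_eq_of_le h0 with h | h
    · exact h
    · exfalso; rw [← h, mul_zero] at hi; linarith
  refine ⟨i, hxi, ?_⟩
  rw [ge_iff_le, div_le_iff₀ (by positivity)]
  calc gap ≤ s (bas i) * x (bas i) * m :=
        (div_le_iff₀ (by positivity : (0:ℝ) < (m:ℝ))).mp hi
    _ = s (bas i) * (↑m * x (bas i)) := by ring
end

section
/- Let x^t be a non-optimal basic feasible solution with basis B^t, and let j̄ ∈ B^t satisfy x^t_{j̄} > 0 and s*_{j̄} ≥ (c^⊤x^t − z*)/(m x^t_{j̄}) for an optimal dual slack vector s*. Then for any feasible solution x^k of the primal, x^k_{j̄} ≤ m x^t_{j̄} · (c^⊤x^k − z*)/(c^⊤x^t − z*). -/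
open Matrix

/-- Second part of Lemma 3 (Kitahara–Mizuno): if `x^t` is a non-optimal basic feasible
solution with basis `bas`, and the basic index `j̄` satisfies `x^t_{j̄} > 0` and
`s*_{j̄} ≥ (c⬝x^t − z*)/(m x^t_{j̄})` for an optimal dual slack vector `s*`, then every
primal feasible solution `x^k` satisfies
`x^k_{j̄} ≤ m x^t_{j̄} (c⬝x^k − z*)/(c⬝x^t − z*)`. -/
theorem fixed_variable_upper_bound {m n : ℕ} (hm : 0 < m)
    (A : Matrix (Fin m) (Fin n) ℝ) (b : Fin m → ℝ) (c : Fin n → ℝ)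
    (bas : Fin m → Fin n) (hbas : IsBasis A bas)
    (xt : Fin n → ℝ)
    (hxzero : ∀ j, j ∉ Set.range bas → xt j = 0)
    (hxfeas : A *ᵥ xt = b) (hx0 : 0 ≤ xt)
    (zstar : ℝ)
    (hzopt : ∀ v, A *ᵥ v = b → 0 ≤ v → zstar ≤ c ⬝ᵥ v)
    (y : Fin m → ℝ) (s : Fin n → ℝ)
    (hdual : Aᵀ *ᵥ y + s = c) (hs : 0 ≤ s) (hstrong : b ⬝ᵥ y = zstar)
    (hnonopt : zstar < c ⬝ᵥ xt)
    (jbar : Fin n) (hjbar : jbar ∈ Set.range bas)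
    (hjpos : 0 < xt jbar)
    (hjs : s jbar ≥ (c ⬝ᵥ xt - zstar) / (m * xt jbar))
    (xk : Fin n → ℝ) (hkfeas : A *ᵥ xk = b) (hk0 : 0 ≤ xk) :
    xk jbar ≤ m * xt jbar * ((c ⬝ᵥ xk - zstar) / (c ⬝ᵥ xt - zstar)) := by
  have hΔt : 0 < c ⬝ᵥ xt - zstar := by linarith
  have hΔk : 0 ≤ c ⬝ᵥ xk - zstar := by
    have := hzopt xk hkfeas hk0; linarith
  have hmxt : (0:ℝ) < m * xt jbar := by positivity
  have hsdot : s ⬝ᵥ xk = c ⬝ᵥ xk - zstar := by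
    have hsc : s = c - Aᵀ *ᵥ y := by rw [← hdual]; abel
    rw [hsc, sub_dotProduct, Matrix.mulVec_transpose,
      ← Matrix.dotProduct_mulVec, hkfeas, dotProduct_comm y b, hstrong]
  have hjle : s jbar * xk jbar ≤ s ⬝ᵥ xk :=
    Finset.single_le_sum (fun i _ => mul_nonneg (hs i) (hk0 i)) (Finset.mem_univ jbar)
  rw [ge_iff_le, div_le_iff₀ hmxt] at hjs
  rw [← mul_div_assoc, le_div_iff₀ hΔt]
  have h1 := mul_le_mul_of_nonneg_left hjs (hk0 jbar)
  have h2 := mul_le_mul_of_nonneg_left hjle (le_of_lt hmxt)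
  nlinarith [h1, h2, hsdot]
end

section
/- For a nondegenerate standard-form LP with optimal value z*, non-optimal initial BFS x^0, and second-best BFS value c^⊤x̄, the simplex method with the largest distance rule terminates in at most min{ ⌈(mγ/(βδ)) log((c^⊤x^0 − z*)/(c^⊤x̄ − z*))⌉, (n − m)⌈(mγ/(βδ)) log(mγ/δ)⌉ } iterations. -/
open Matrix Finset

/-- `x'` is obtained from the basic feasible solution `x` by one pivot of the simplex
method with the largest distance rule. -/
def LDPivot {m n : ℕ} (A : Matrix (Fin m) (Fin n) ℝ) (b : Fin m → ℝ) (c : Fin n → ℝ)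
    (x x' : Fin n → ℝ) : Prop :=
  ∃ (bas : Fin m → Fin n) (y : Fin m → ℝ) (jl : Fin n),
    IsBasis A bas ∧ (∀ j, j ∉ Set.range bas → x j = 0) ∧ A *ᵥ x = b ∧ 0 ≤ x ∧
    ((A.submatrix id bas)ᵀ *ᵥ y = fun i => c (bas i)) ∧
    jl ∉ Set.range bas ∧ c jl - (Aᵀ *ᵥ y) jl < 0 ∧
    (∀ j, j ∉ Set.range bas →
      (c jl - (Aᵀ *ᵥ y) jl) / colNorm A jl ≤ (c j - (Aᵀ *ᵥ y) j) / colNorm A j) ∧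
    A *ᵥ x' = b ∧ 0 ≤ x' ∧ (∀ j, j ∉ Set.range bas → j ≠ jl → x' j = 0) ∧
    (∀ x'', A *ᵥ x'' = b → 0 ≤ x'' → (∀ j, j ∉ Set.range bas → j ≠ jl → x'' j = 0) →
      c ⬝ᵥ x' ≤ c ⬝ᵥ x'')

set_option maxHeartbeats 1000000

lemma KM_dot_transpose {m n : ℕ} (A : Matrix (Fin m) (Fin n) ℝ) (y : Fin m → ℝ)
    (v : Fin n → ℝ) : (Aᵀ *ᵥ y) ⬝ᵥ v = y ⬝ᵥ (A *ᵥ v) := by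
  rw [dotProduct_comm, Matrix.dotProduct_mulVec, Matrix.vecMul_transpose,
    dotProduct_comm]

lemma KM_colNorm_pos {m n : ℕ} (A : Matrix (Fin m) (Fin n) ℝ) (j : Fin n)
    (h : ∃ i, A i j ≠ 0) : 0 < colNorm A j := by
  obtain ⟨i, hi⟩ := h
  apply Real.sqrt_pos.mpr
  exact Finset.sum_pos' (fun k _ => sq_nonneg _) ⟨i, Finset.mem_univ i, by positivity⟩

lemma KM_sum_le {m n : ℕ} (A : Matrix (Fin m) (Fin n) ℝ) (b : Fin m → ℝ) (γ : ℝ)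
    (hnd : ∀ v, IsBasicFeasible A b v →
      (Finset.univ.filter fun j => 0 < v j).card = m)
    (hγ : ∀ v, IsBasicFeasible A b v → ∀ j, 0 < v j → v j ≤ γ)
    (v : Fin n → ℝ) (hv : IsBasicFeasible A b v) : ∑ j, v j ≤ m * γ := by
  classical
  have h0 : ∀ j, 0 ≤ v j := hv.2.2
  have : ∑ j, v j = ∑ j ∈ Finset.univ.filter (fun j => 0 < v j), v j := by
    rw [Finset.sum_filter_of_ne]
    intro j _ hj
    exact lt_of_le_of_ne (h0 j) (Ne.symm hj)
  rw [this]
  calc ∑ j ∈ Finset.univ.filter (fun j => 0 < v j), v j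
      ≤ ∑ j ∈ Finset.univ.filter (fun j => 0 < v j), γ := by
        apply Finset.sum_le_sum
        intro j hj
        exact hγ v hv j (Finset.mem_filter.mp hj).2
    _ = m * γ := by rw [Finset.sum_const, hnd v hv, nsmul_eq_mul]

lemma KM_basic_pos {m n : ℕ} {A : Matrix (Fin m) (Fin n) ℝ} {b : Fin m → ℝ}
    {v : Fin n → ℝ} {bas : Fin m → Fin n}
    (hnd : (Finset.univ.filter fun j => 0 < v j).card = m)
    (hinj : Function.Injective bas)
    (hsupp : ∀ j, j ∉ Set.range bas → v j = 0) (i : Fin m) : 0 < v (bas i) := by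
  classical
  set P := Finset.univ.filter fun j => 0 < v j with hP
  have hsub : P ⊆ Finset.univ.image bas := by
    intro j hj
    have hj' : 0 < v j := (Finset.mem_filter.mp hj).2
    by_contra hc
    have : j ∉ Set.range bas := by
      intro ⟨i', hi'⟩
      exact hc (Finset.mem_image.mpr ⟨i', Finset.mem_univ _, hi'⟩)
    exact absurd (hsupp j this) (by linarith)
  have hcard : (Finset.univ.image bas).card = m := by
    rw [Finset.card_image_of_injective _ hinj, Finset.card_univ, Fintype.card_fin]
  have heq : P = Finset.univ.image bas :=
    Finset.eq_of_subset_of_card_le hsub (by rw [hcard, hnd])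
  have : bas i ∈ P := heq ▸ Finset.mem_image.mpr ⟨i, Finset.mem_univ _, rfl⟩
  exact (Finset.mem_filter.mp this).2

lemma KM_pivot_decrease {m n : ℕ} [NeZero n] (hm : 0 < m)
    (A : Matrix (Fin m) (Fin n) ℝ) (b : Fin m → ℝ) (c : Fin n → ℝ)
    (hcols : ∀ j : Fin n, ∃ i : Fin m, A i j ≠ 0)
    (hnd : ∀ v, IsBasicFeasible A b v →
      (Finset.univ.filter fun j => 0 < v j).card = m)
    (β δ γ : ℝ)
    (hβ : β = (Finset.univ.inf' Finset.univ_nonempty fun j => colNorm A j) /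
      (Finset.univ.sup' Finset.univ_nonempty fun j => colNorm A j))
    (hδ : 0 < δ)
    (hδγ : ∀ v, IsBasicFeasible A b v → ∀ j, 0 < v j → δ ≤ v j ∧ v j ≤ γ)
    (zstar : ℝ)
    (hzatt : ∃ v, IsBasicFeasible A b v ∧ c ⬝ᵥ v = zstar)
    (hzopt : ∀ v, A *ᵥ v = b → 0 ≤ v → zstar ≤ c ⬝ᵥ v)
    (x x' : Fin n → ℝ) (hx' : IsBasicFeasible A b x')
    (hLD : LDPivot A b c x x') :
    c ⬝ᵥ x' - zstar ≤ (1 - β * δ / (m * γ)) * (c ⬝ᵥ x - zstar) := by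
  classical
  obtain ⟨bas, y, jl, ⟨hbasinj, hBunit⟩, hxsupp, hxfeas, hxpos, hy, hjl, hneg, hrule,
    hfeas', hpos', hsupp', hmin⟩ := hLD
  haveI : Nonempty (Fin m) := ⟨⟨0, hm⟩⟩
  set s := fun j => c j - (Aᵀ *ᵥ y) j with hs
  have hxBFS : IsBasicFeasible A b x := ⟨⟨bas, ⟨hbasinj, hBunit⟩, hxsupp⟩, hxfeas, hxpos⟩
  obtain ⟨xstar, hxstarBFS, hxstarval⟩ := hzatt
  -- norms
  set ν := Finset.univ.sup' Finset.univ_nonempty fun j => colNorm A j with hν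
  set μ := Finset.univ.inf' Finset.univ_nonempty fun j => colNorm A j with hμ
  have hnormpos : ∀ j, 0 < colNorm A j := fun j => KM_colNorm_pos A j (hcols j)
  have hμpos : 0 < μ := by
    rw [hμ, Finset.lt_inf'_iff]
    exact fun j _ => hnormpos j
  have hub : ∀ j, colNorm A j ≤ ν := fun j => Finset.le_sup' _ (Finset.mem_univ j)
  have hlb : ∀ j, μ ≤ colNorm A j := fun j => Finset.inf'_le _ (Finset.mem_univ j)
  have hn : 0 < n := Nat.pos_of_ne_zero (NeZero.ne n)
  have hνpos : 0 < ν := hμpos.trans_le ((hlb ⟨0, hn⟩).trans (hub ⟨0, hn⟩))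
  have hβpos : 0 < β := by rw [hβ]; positivity
  -- γ positive
  have hγpos : 0 < γ := by
    have h1 : 0 < x (bas ⟨0, hm⟩) := KM_basic_pos (A := A) (b := b) (hnd x hxBFS) hbasinj hxsupp ⟨0, hm⟩
    have := hδγ x hxBFS _ h1
    linarith
  -- reduced costs vanish on basis
  have hsbas : ∀ i, s (bas i) = 0 := by
    intro i
    have := congrFun hy i
    simp only [Matrix.mulVec, dotProduct, Matrix.transpose_apply,
      Matrix.submatrix_apply, id_eq] at this ⊢
    simp [hs, Matrix.mulVec, dotProduct, Matrix.transpose_apply, this]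
  -- objective identity
  have hobj : ∀ v : Fin n → ℝ, A *ᵥ v = b → c ⬝ᵥ v = y ⬝ᵥ b + s ⬝ᵥ v := by
    intro v hv
    have : c ⬝ᵥ v = (Aᵀ *ᵥ y) ⬝ᵥ v + s ⬝ᵥ v := by
      simp only [hs, dotProduct]
      rw [← Finset.sum_add_distrib]
      apply Finset.sum_congr rfl
      intro j _
      ring
    rw [this, KM_dot_transpose, hv]
  have hsx : s ⬝ᵥ x = 0 := by
    apply Finset.sum_eq_zero
    intro j _
    by_cases hj : j ∈ Set.range bas
    · obtain ⟨i, rfl⟩ := hj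
      rw [hsbas i, zero_mul]
    · rw [hxsupp j hj, mul_zero]
  have hgap : c ⬝ᵥ x - zstar = -(s ⬝ᵥ xstar) := by
    rw [hobj x hxfeas, hsx, ← hxstarval, hobj xstar hxstarBFS.2.1]
    ring
  -- the bound on the entering reduced cost
  set r := -(s jl) / colNorm A jl with hr
  have hrpos : 0 < r := by
    rw [hr]
    apply div_pos (by simp only [hs] at hneg ⊢; linarith) (hnormpos jl)
  have hsum_xstar : ∑ j, xstar j ≤ m * γ :=
    KM_sum_le A b γ hnd (fun v hv j hj => (hδγ v hv j hj).2) xstar hxstarBFS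
  have hneg' : s jl < 0 := hneg
  have hxstarpos : ∀ j, 0 ≤ xstar j := hxstarBFS.2.2
  have hbound : c ⬝ᵥ x - zstar ≤ r * (ν * (m * γ)) := by
    rw [hgap]
    have h1 : -(s ⬝ᵥ xstar) = ∑ j, -(s j) * xstar j := by
      rw [dotProduct, ← Finset.sum_neg_distrib]
      exact Finset.sum_congr rfl fun j _ => by ring
    rw [h1]
    have step1 : ∑ j, -(s j) * xstar j ≤ ∑ j, r * ν * xstar j := by
      apply Finset.sum_le_sum
      intro j _
      have hRHS : -(s j) ≤ r * ν → -(s j) * xstar j ≤ r * ν * xstar j := fun h =>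
        mul_le_mul_of_nonneg_right h (hxstarpos j)
      apply hRHS
      by_cases hj : j ∈ Set.range bas
      · obtain ⟨i, rfl⟩ := hj
        rw [hsbas i, neg_zero]
        positivity
      · have h2 : s jl / colNorm A jl ≤ s j / colNorm A j := hrule j hj
        have hnj := hnormpos j
        have hnl := hnormpos jl
        rw [div_le_div_iff₀ hnl hnj] at h2
        have h3 : -(s j) ≤ r * colNorm A j := by
          rw [hr, div_mul_eq_mul_div, le_div_iff₀ hnl]
          nlinarith
        refine h3.trans ?_
        exact mul_le_mul_of_nonneg_left (hub j) hrpos.le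
    refine step1.trans ?_
    have : ∑ j, r * ν * xstar j = r * ν * ∑ j, xstar j := by
      rw [Finset.mul_sum]
    rw [this, mul_assoc]
    refine mul_le_mul_of_nonneg_left ?_ hrpos.le
    exact mul_le_mul_of_nonneg_left hsum_xstar hνpos.le
  have hgap0 : 0 ≤ c ⬝ᵥ x - zstar := by
    have := hzopt x hxfeas hxpos
    linarith
  have hentering : β * (c ⬝ᵥ x - zstar) / (↑m * γ) ≤ -(s jl) := by
    have hmγ : 0 < (m : ℝ) * γ := by positivity
    have h3 : -(s jl) = r * colNorm A jl := by
      rw [hr, div_mul_cancel₀ _ (hnormpos jl).ne']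
    have h5 : (c ⬝ᵥ x - zstar) / (ν * ((m : ℝ) * γ)) ≤ r := by
      rw [div_le_iff₀ (by positivity)]
      linarith [hbound]
    calc β * (c ⬝ᵥ x - zstar) / ((m : ℝ) * γ)
        = ((c ⬝ᵥ x - zstar) / (ν * ((m : ℝ) * γ))) * μ := by
          rw [hβ]; field_simp
      _ ≤ r * μ := mul_le_mul_of_nonneg_right h5 hμpos.le
      _ ≤ r * colNorm A jl := mul_le_mul_of_nonneg_left (hlb jl) hrpos.le
      _ = -(s jl) := h3.symm
  -- construction of a strictly better point supported on bas ∪ {jl}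
  set B := A.submatrix id bas with hB
  have hdet : IsUnit B.det := (Matrix.isUnit_iff_isUnit_det B).mp hBunit
  have hBinv : B * B⁻¹ = 1 := Matrix.mul_nonsing_inv B hdet
  set d := B⁻¹ *ᵥ (fun i => A i jl) with hd
  have hBd : B *ᵥ d = fun i => A i jl := by
    rw [hd, Matrix.mulVec_mulVec, hBinv, Matrix.one_mulVec]
  have hbaspos : ∀ i, 0 < x (bas i) := fun i =>
    KM_basic_pos (A := A) (b := b) (hnd x hxBFS) hbasinj hxsupp i
  set p := Finset.univ.inf' Finset.univ_nonempty (fun i => x (bas i)) with hp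
  have hppos : 0 < p := by
    rw [hp, Finset.lt_inf'_iff]
    exact fun i _ => hbaspos i
  have hple : ∀ i, p ≤ x (bas i) := fun i => Finset.inf'_le _ (Finset.mem_univ i)
  set M := Finset.univ.sup' Finset.univ_nonempty (fun i => |d i|) with hM
  have hMle : ∀ i, |d i| ≤ M := fun i => by rw [hM]; exact Finset.le_sup' (fun i => |d i|) (Finset.mem_univ i)
  have hM0 : 0 ≤ M := le_trans (abs_nonneg _) (hMle ⟨0, hm⟩)
  set θ := p / (M + 1) with hθ
  have hθpos : 0 < θ := div_pos hppos (by linarith)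
  set u := fun j => if j = jl then (1 : ℝ) else 0 with hu
  set w := fun j => ∑ i, (if bas i = j then d i else 0) with hw
  set x'' := x + θ • (u - w) with hx''def
  have hx''app : ∀ j, x'' j = x j + θ * (u j - w j) := by
    intro j
    simp [hx''def]
  have hujl : u jl = 1 := by simp [hu]
  have hwjl : w jl = 0 := by
    rw [hw]
    exact Finset.sum_eq_zero fun i _ => if_neg fun h => hjl ⟨i, h⟩
  have hubas : ∀ i, u (bas i) = 0 := fun i => if_neg fun h => hjl ⟨i, h⟩
  have hwbas : ∀ i0, w (bas i0) = d i0 := by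
    intro i0
    simp only [hw]
    rw [Finset.sum_eq_single i0]
    · simp
    · intro i1 _ hne
      exact if_neg fun h => hne (hbasinj h)
    · simp
  have hx''other : ∀ j, j ∉ Set.range bas → j ≠ jl → x'' j = 0 := by
    intro j hj hjne
    have h2 : w j = 0 := Finset.sum_eq_zero fun i _ => if_neg fun h => hj ⟨i, h⟩
    rw [hx''app, h2, hu]
    simp only [if_neg hjne, hxsupp j hj]
    ring
  have hx''nonneg : 0 ≤ x'' := by
    intro j
    simp only [Pi.zero_apply]
    by_cases hj : j ∈ Set.range bas
    · obtain ⟨i, rfl⟩ := hj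
      rw [hx''app, hubas i, hwbas i]
      have h3 : θ * d i ≤ θ * M :=
        mul_le_mul_of_nonneg_left ((le_abs_self _).trans (hMle i)) hθpos.le
      have h4 : θ * M ≤ p := by
        rw [hθ, div_mul_eq_mul_div, div_le_iff₀ (by linarith : (0:ℝ) < M + 1)]
        nlinarith
      have := hple i
      simp only [zero_sub, mul_neg]
      linarith
    · by_cases hjne : j = jl
      · subst hjne
        rw [hx''app, hujl, hwjl]
        rw [hxsupp j hj]
        simpa using hθpos.le
      · exact le_of_eq (hx''other j hj hjne).symm
  have hAu : A *ᵥ u = fun i => A i jl := by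
    funext i
    simp [Matrix.mulVec, dotProduct, hu, mul_ite]
  have hAw : A *ᵥ w = fun i => A i jl := by
    have h1 : A *ᵥ w = B *ᵥ d := by
      funext i
      simp only [Matrix.mulVec, dotProduct, hw, Finset.mul_sum, mul_ite, mul_zero]
      rw [Finset.sum_comm]
      apply Finset.sum_congr rfl
      intro k _
      rw [Finset.sum_ite_eq]
      simp [hB]
    rw [h1, hBd]
  have hAx'' : A *ᵥ x'' = b := by
    rw [hx''def, Matrix.mulVec_add, Matrix.mulVec_smul, Matrix.mulVec_sub, hAu, hAw,
      hxfeas]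
    simp
  have hcu : c ⬝ᵥ u = c jl := by
    simp [dotProduct, hu, mul_ite]
  have hcw : c ⬝ᵥ w = (Aᵀ *ᵥ y) jl := by
    have h1 : c ⬝ᵥ w = ∑ k, c (bas k) * d k := by
      simp only [dotProduct, hw, Finset.mul_sum, mul_ite, mul_zero]
      rw [Finset.sum_comm]
      apply Finset.sum_congr rfl
      intro k _
      rw [Finset.sum_ite_eq]
      simp
    rw [h1]
    have h2 : ∑ k, c (bas k) * d k = (Bᵀ *ᵥ y) ⬝ᵥ d := by
      rw [hy]
      rfl
    rw [h2, KM_dot_transpose, hBd]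
    simp [dotProduct, Matrix.mulVec, Matrix.transpose_apply, mul_comm]
  have hcx'' : c ⬝ᵥ x'' = c ⬝ᵥ x + θ * s jl := by
    rw [hx''def, dotProduct_add, dotProduct_smul, dotProduct_sub,
      hcu, hcw]
    simp only [hs, smul_eq_mul]
  have hcltx : c ⬝ᵥ x' < c ⬝ᵥ x := by
    refine lt_of_le_of_lt (hmin x'' hAx'' hx''nonneg hx''other) ?_
    rw [hcx'']
    nlinarith
  have hsx' : s ⬝ᵥ x' = s jl * x' jl := by
    have hz : ∀ j ∈ Finset.univ, j ≠ jl → s j * x' j = 0 := by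
      intro j _ hne
      by_cases hj : j ∈ Set.range bas
      · obtain ⟨i, rfl⟩ := hj
        rw [hsbas i, zero_mul]
      · rw [hsupp' j hj hne, mul_zero]
    exact Finset.sum_eq_single_of_mem jl (Finset.mem_univ jl) hz
  have hcx'id : c ⬝ᵥ x' = c ⬝ᵥ x + s jl * x' jl := by
    rw [hobj x' hfeas', hsx', hobj x hxfeas, hsx]
    ring
  have hx'jlpos : 0 < x' jl := by
    have h1 : s jl * x' jl < 0 := by
      rw [hcx'id] at hcltx
      linarith
    by_contra h
    push_neg at h
    nlinarith
  have hx'jl : δ ≤ x' jl := (hδγ x' hx' jl hx'jlpos).1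
  have hdec : c ⬝ᵥ x' ≤ c ⬝ᵥ x - δ * (-(s jl)) := by
    rw [hcx'id]
    nlinarith
  have hmγ : 0 < (m : ℝ) * γ := by positivity
  have heq : (1 - β * δ / ((m : ℝ) * γ)) * (c ⬝ᵥ x - zstar)
      = (c ⬝ᵥ x - zstar) - δ * (β * (c ⬝ᵥ x - zstar) / ((m : ℝ) * γ)) := by
    field_simp
  rw [heq]
  have h6 : δ * (β * (c ⬝ᵥ x - zstar) / ((m : ℝ) * γ)) ≤ δ * (-(s jl)) :=
    mul_le_mul_of_nonneg_left hentering hδ.le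
  clear_value s ν μ B d p M θ u w x''
  linarith

/-- Corollary of the paper: for a nondegenerate standard-form LP with optimal value
`z*`, non-optimal initial BFS `x⁰` and second-best BFS value `c⬝x̄`, the simplex method
with the largest distance rule reaches an optimal solution in at most
`min{⌈(mγ/(βδ)) log((c⬝x⁰ − z*)/(c⬝x̄ − z*))⌉, (n − m)⌈(mγ/(βδ)) log(mγ/δ)⌉}`
iterations, where `⌈r⌉` is the smallest integer greater than `r`. -/
theorem nondegenerate_iteration_bound {m n : ℕ} [NeZero n]
    (hm : 0 < m) (hmn : m < n)
    (A : Matrix (Fin m) (Fin n) ℝ) (b : Fin m → ℝ) (c : Fin n → ℝ)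
    (hrank : A.rank = m)
    (hcols : ∀ j : Fin n, ∃ i : Fin m, A i j ≠ 0)
    (hnd : ∀ v, IsBasicFeasible A b v →
      (Finset.univ.filter fun j => 0 < v j).card = m)
    (β δ γ : ℝ)
    (hβ : β = (Finset.univ.inf' Finset.univ_nonempty fun j => colNorm A j) /
      (Finset.univ.sup' Finset.univ_nonempty fun j => colNorm A j))
    (hδ : 0 < δ)
    (hδγ : ∀ v, IsBasicFeasible A b v → ∀ j, 0 < v j → δ ≤ v j ∧ v j ≤ γ)
    (zstar : ℝ)
    (hzatt : ∃ v, IsBasicFeasible A b v ∧ c ⬝ᵥ v = zstar)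
    (hzopt : ∀ v, A *ᵥ v = b → 0 ≤ v → zstar ≤ c ⬝ᵥ v)
    (hdualopt : ∃ (y : Fin m → ℝ) (s : Fin n → ℝ),
      Aᵀ *ᵥ y + s = c ∧ 0 ≤ s ∧ b ⬝ᵥ y = zstar)
    (xbar : Fin n → ℝ) (hxbar : IsBasicFeasible A b xbar)
    (hxbar1 : zstar < c ⬝ᵥ xbar)
    (hsecond : ∀ v, IsBasicFeasible A b v → c ⬝ᵥ v < c ⬝ᵥ xbar → c ⬝ᵥ v = zstar)
    (x : ℕ → Fin n → ℝ)
    (hBFS : ∀ t, IsBasicFeasible A b (x t))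
    (hstep : ∀ t, (zstar < c ⬝ᵥ x t → LDPivot A b c (x t) (x (t + 1))) ∧
      (c ⬝ᵥ x t = zstar → x (t + 1) = x t))
    (hx0 : zstar < c ⬝ᵥ x 0) :
    ∃ t, t ≤ min
        (⌊(m * γ / (β * δ)) *
          Real.log ((c ⬝ᵥ x 0 - zstar) / (c ⬝ᵥ xbar - zstar))⌋₊ + 1)
        ((n - m) * (⌊(m * γ / (β * δ)) * Real.log (m * γ / δ)⌋₊ + 1)) ∧
      c ⬝ᵥ x t = zstar := by
  classical
  -- basic positivity facts
  have hnormpos : ∀ j, 0 < colNorm A j := fun j => KM_colNorm_pos A j (hcols j)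
  have hβpos : 0 < β := by
    rw [hβ]
    apply div_pos
    · rw [Finset.lt_inf'_iff]
      exact fun j _ => hnormpos j
    · obtain ⟨j⟩ := (inferInstance : Nonempty (Fin n))
      exact lt_of_lt_of_le (hnormpos j) (Finset.le_sup' _ (Finset.mem_univ j))
  have hδγ' : δ ≤ γ := by
    have hcard := hnd (x 0) (hBFS 0)
    have hne : (Finset.univ.filter fun j => 0 < x 0 j).Nonempty :=
      Finset.card_pos.mp (by rw [hcard]; exact hm)
    obtain ⟨j, hj⟩ := hne
    have := hδγ (x 0) (hBFS 0) j (Finset.mem_filter.mp hj).2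
    linarith
  have hγpos : 0 < γ := lt_of_lt_of_le hδ hδγ'
  set q := β * δ / ((m : ℝ) * γ) with hq
  have hmγ : 0 < (m : ℝ) * γ := by positivity
  have hqpos : 0 < q := by rw [hq]; positivity
  -- one-step decrease
  have key : ∀ t, zstar < c ⬝ᵥ x t →
      c ⬝ᵥ x (t + 1) - zstar ≤ (1 - q) * (c ⬝ᵥ x t - zstar) := fun t h =>
    KM_pivot_decrease hm A b c hcols hnd β δ γ hβ hδ hδγ zstar hzatt hzopt
      (x t) (x (t + 1)) (hBFS (t + 1)) ((hstep t).1 h)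
  have hgapnn : ∀ t, 0 ≤ c ⬝ᵥ x t - zstar := by
    intro t
    have := hzopt (x t) (hBFS t).2.1 (hBFS t).2.2
    linarith
  have h1q : 0 ≤ 1 - q := by
    by_contra hcon
    push_neg at hcon
    have h2 := mul_neg_of_neg_of_pos hcon (by linarith : (0:ℝ) < c ⬝ᵥ x 0 - zstar)
    linarith [key 0 hx0, hgapnn 1]
  -- stability of optimality
  have hstable : ∀ t, c ⬝ᵥ x t = zstar → ∀ u, c ⬝ᵥ x (t + u) = zstar := by
    intro t ht u
    induction u with
    | zero => exact ht
    | succ u ih =>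
      have := (hstep (t + u)).2 ih
      show c ⬝ᵥ x (t + u + 1) = zstar
      rw [this]
      exact ih
  -- geometric decay
  have hgeo : ∀ s0 t, c ⬝ᵥ x (s0 + t) - zstar ≤ (1 - q) ^ t * (c ⬝ᵥ x s0 - zstar) := by
    intro s0 t
    induction t with
    | zero => simp
    | succ t ih =>
      show c ⬝ᵥ x (s0 + t + 1) - zstar ≤ _
      by_cases h : zstar < c ⬝ᵥ x (s0 + t)
      · have h1 := key (s0 + t) h
        have h2 : (1 - q) * (c ⬝ᵥ x (s0 + t) - zstar)
            ≤ (1 - q) * ((1 - q) ^ t * (c ⬝ᵥ x s0 - zstar)) :=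
          mul_le_mul_of_nonneg_left ih h1q
        calc c ⬝ᵥ x (s0 + t + 1) - zstar ≤ (1 - q) * ((1 - q) ^ t * (c ⬝ᵥ x s0 - zstar)) :=
              le_trans h1 h2
          _ = (1 - q) ^ (t + 1) * (c ⬝ᵥ x s0 - zstar) := by rw [pow_succ]; ring
      · push_neg at h
        have heq : c ⬝ᵥ x (s0 + t) = zstar := le_antisymm h (by linarith [hgapnn (s0 + t)])
        have hxeq := (hstep (s0 + t)).2 heq
        rw [hxeq, heq]
        have : 0 ≤ (1 - q) ^ (t + 1) * (c ⬝ᵥ x s0 - zstar) :=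
          mul_nonneg (pow_nonneg h1q (t + 1)) (hgapnn s0)
        linarith
  have hQq : ((m : ℝ) * γ / (β * δ)) * q = 1 := by
    rw [hq]
    field_simp
  have hQnn : 0 ≤ (m : ℝ) * γ / (β * δ) := by positivity
  have hloglem : 0 < 1 - q → Real.log (1 - q) ≤ -q := by
    intro h0
    have := Real.log_le_sub_one_of_pos h0
    linarith
  -- Part (a): the log-ratio bound
  set N1 := ⌊((m : ℝ) * γ / (β * δ)) *
      Real.log ((c ⬝ᵥ x 0 - zstar) / (c ⬝ᵥ xbar - zstar))⌋₊ + 1 with hN1def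
  have hN1 : c ⬝ᵥ x N1 = zstar := by
    by_contra hc
    have hpos : zstar < c ⬝ᵥ x N1 :=
      lt_of_le_of_ne (by linarith [hgapnn N1]) (fun h => hc h.symm)
    have hge : c ⬝ᵥ xbar - zstar ≤ c ⬝ᵥ x N1 - zstar := by
      by_contra h2
      push_neg at h2
      exact hc (hsecond (x N1) (hBFS N1) (by linarith))
    have hgeo0 := hgeo 0 N1
    rw [Nat.zero_add] at hgeo0
    have hg0pos : 0 < c ⬝ᵥ x 0 - zstar := by linarith
    have hgbpos : 0 < c ⬝ᵥ xbar - zstar := by linarith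
    rcases eq_or_lt_of_le h1q with h0 | h0
    · rw [← h0, zero_pow (by omega : N1 ≠ 0), zero_mul] at hgeo0
      linarith
    · have hpow : c ⬝ᵥ xbar - zstar ≤ (1 - q) ^ N1 * (c ⬝ᵥ x 0 - zstar) :=
        le_trans hge hgeo0
      have h3 : Real.log (c ⬝ᵥ xbar - zstar)
          ≤ N1 * Real.log (1 - q) + Real.log (c ⬝ᵥ x 0 - zstar) := by
        have hl := Real.log_le_log hgbpos hpow
        rw [Real.log_mul (pow_pos h0 N1).ne' hg0pos.ne', Real.log_pow] at hl
        push_cast at hl ⊢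
        linarith
      have h4 : (N1 : ℝ) * q ≤
          Real.log ((c ⬝ᵥ x 0 - zstar) / (c ⬝ᵥ xbar - zstar)) := by
        rw [Real.log_div hg0pos.ne' hgbpos.ne']
        have h5 : (N1 : ℝ) * Real.log (1 - q) ≤ (N1 : ℝ) * (-q) :=
          mul_le_mul_of_nonneg_left (hloglem h0) (Nat.cast_nonneg N1)
        linarith
      have h5 : (N1 : ℝ) ≤ ((m : ℝ) * γ / (β * δ)) *
          Real.log ((c ⬝ᵥ x 0 - zstar) / (c ⬝ᵥ xbar - zstar)) := by
        have h6 := mul_le_mul_of_nonneg_left h4 hQnn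
        calc (N1 : ℝ) = ((m : ℝ) * γ / (β * δ)) * q * N1 := by rw [hQq]; ring
          _ = ((m : ℝ) * γ / (β * δ)) * ((N1 : ℝ) * q) := by ring
          _ ≤ _ := h6
      have h7 : N1 ≤ ⌊((m : ℝ) * γ / (β * δ)) *
          Real.log ((c ⬝ᵥ x 0 - zstar) / (c ⬝ᵥ xbar - zstar))⌋₊ := Nat.le_floor h5
      omega
  -- Part (b): the (n-m)*K bound
  set K := ⌊((m : ℝ) * γ / (β * δ)) * Real.log ((m : ℝ) * γ / δ)⌋₊ + 1 with hKdef
  set N2 := (n - m) * K with hN2def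
  have hN2 : c ⬝ᵥ x N2 = zstar := by
    by_contra hc
    have hposall : ∀ t, t ≤ N2 → zstar < c ⬝ᵥ x t := by
      intro t ht
      rcases eq_or_lt_of_le (by linarith [hgapnn t] : zstar ≤ c ⬝ᵥ x t) with h | h
      · exfalso
        have h2 := hstable t h.symm (N2 - t)
        rw [show t + (N2 - t) = N2 by omega] at h2
        exact hc h2
      · exact h
    obtain ⟨y, sd, hys, hsd0, hbys⟩ := hdualopt
    have hgapeq : ∀ v : Fin n → ℝ, A *ᵥ v = b → c ⬝ᵥ v - zstar = sd ⬝ᵥ v := by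
      intro v hv
      have h1 : c ⬝ᵥ v = (Aᵀ *ᵥ y) ⬝ᵥ v + sd ⬝ᵥ v := by
        rw [← hys, add_dotProduct]
      rw [h1, KM_dot_transpose, hv, dotProduct_comm, hbys]
      ring
    -- decay of (1-q)^K below δ/(mγ)
    have hKpow : (1 - q) ^ K * ((m : ℝ) * γ) < δ := by
      rcases eq_or_lt_of_le h1q with h0 | h0
      · rw [← h0, zero_pow (by omega : K ≠ 0), zero_mul]
        exact hδ
      · have hKgt : ((m : ℝ) * γ / (β * δ)) * Real.log ((m : ℝ) * γ / δ) < K := by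
          rw [hKdef]
          push_cast
          exact Nat.lt_floor_add_one _
        have hlognn : 0 ≤ Real.log ((m : ℝ) * γ / δ) := by
          apply Real.log_nonneg
          rw [le_div_iff₀ hδ]
          have : (1 : ℝ) ≤ (m : ℝ) := by exact_mod_cast hm
          nlinarith
        have hKq : Real.log ((m : ℝ) * γ / δ) < K * q := by
          have h6 := mul_le_mul_of_nonneg_left hKgt.le hqpos.le
          calc Real.log ((m : ℝ) * γ / δ)
              = q * (((m : ℝ) * γ / (β * δ)) * Real.log ((m : ℝ) * γ / δ)) := by
                rw [show q * (((m : ℝ) * γ / (β * δ)) * Real.log ((m : ℝ) * γ / δ))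
                  = (((m : ℝ) * γ / (β * δ)) * q) * Real.log ((m : ℝ) * γ / δ) by ring,
                  hQq, one_mul]
            _ < q * K := by
                apply mul_lt_mul_of_pos_left hKgt hqpos
            _ = K * q := by ring
        have hlt : Real.log ((1 - q) ^ K) < Real.log (δ / ((m : ℝ) * γ)) := by
          rw [Real.log_pow, Real.log_div hδ.ne' hmγ.ne']
          have h7 : (K : ℝ) * Real.log (1 - q) ≤ (K : ℝ) * (-q) :=
            mul_le_mul_of_nonneg_left (hloglem h0) (Nat.cast_nonneg K)
          rw [Real.log_div hmγ.ne' hδ.ne'] at hKq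
          linarith
        have h8 : (1 - q) ^ K < δ / ((m : ℝ) * γ) := by
          have h9 := Real.exp_lt_exp.mpr hlt
          rwa [Real.exp_log (pow_pos h0 K), Real.exp_log (by positivity)] at h9
        rw [← lt_div_iff₀ hmγ]
        exact h8
    -- index selection
    have hpick : ∀ t, zstar < c ⬝ᵥ x t →
        ∃ j, 0 < x t j ∧ c ⬝ᵥ x t - zstar ≤ ((m : ℝ) * γ) * sd j := by
      intro t ht
      have hxt := hBFS t
      have hcard := hnd (x t) hxt
      have hsum : ∑ j ∈ Finset.univ.filter (fun j => 0 < x t j), sd j * x t j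
          = c ⬝ᵥ x t - zstar := by
        rw [hgapeq (x t) hxt.2.1, dotProduct]
        rw [Finset.sum_filter_of_ne]
        intro j _ hj
        have h0j : (0:ℝ) ≤ x t j := hxt.2.2 j
        rcases eq_or_lt_of_le h0j with h | h
        · exact absurd (by rw [← h, mul_zero]) hj
        · exact h
      have hne : (Finset.univ.filter fun j => 0 < x t j).Nonempty :=
        Finset.card_pos.mp (by rw [hcard]; exact hm)
      have hexists : ∃ j ∈ Finset.univ.filter (fun j => 0 < x t j),
          (c ⬝ᵥ x t - zstar) / m ≤ sd j * x t j := by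
        by_contra hcon
        push_neg at hcon
        have hlt : ∑ j ∈ Finset.univ.filter (fun j => 0 < x t j), sd j * x t j
            < ∑ _j ∈ Finset.univ.filter (fun j => 0 < x t j), (c ⬝ᵥ x t - zstar) / m :=
          Finset.sum_lt_sum_of_nonempty hne fun j hj => hcon j hj
        rw [Finset.sum_const, hcard, nsmul_eq_mul] at hlt
        rw [hsum] at hlt
        have hmpos : (0 : ℝ) < m := by exact_mod_cast hm
        rw [mul_div_cancel₀ _ hmpos.ne'] at hlt
        exact lt_irrefl _ hlt
      obtain ⟨j, hjmem, hj⟩ := hexists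
      have hjpos : 0 < x t j := (Finset.mem_filter.mp hjmem).2
      have hxle : x t j ≤ γ := (hδγ (x t) hxt j hjpos).2
      have hsdj : 0 ≤ sd j := hsd0 j
      refine ⟨j, hjpos, ?_⟩
      have hmpos : (0 : ℝ) < m := by exact_mod_cast hm
      rw [div_le_iff₀ hmpos] at hj
      nlinarith
    -- choose witnesses at times i*K for i = 0, ..., n-m
    have hsel : ∀ i : Fin (n - m + 1), ∃ j, 0 < x (i * K) j ∧
        c ⬝ᵥ x (i * K) - zstar ≤ ((m : ℝ) * γ) * sd j := by
      intro i
      apply hpick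
      apply hposall
      exact Nat.mul_le_mul_right K (Nat.le_of_lt_succ i.isLt)
    choose J hJpos hJle using hsel
    have hgp : ∀ i : Fin (n - m + 1), 0 < c ⬝ᵥ x (i * K) - zstar := by
      intro i
      have := hposall (i * K) (Nat.mul_le_mul_right K (Nat.le_of_lt_succ i.isLt))
      linarith
    have hsdpos : ∀ i : Fin (n - m + 1), 0 < sd (J i) := by
      intro i
      have h1 := hJle i
      have h2 := hgp i
      nlinarith
    have hmain : ∀ i i' : Fin (n - m + 1), i < i' → J i ≠ J i' := by
      intro i i' hlt hJeq
      have hik : (i : ℕ) * K + ((i' : ℕ) - (i : ℕ)) * K = (i' : ℕ) * K := by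
        have : (i : ℕ) ≤ (i' : ℕ) := le_of_lt hlt
        rw [← Nat.add_mul]
        congr 1
        omega
      have hdecay := hgeo ((i : ℕ) * K) (((i' : ℕ) - (i : ℕ)) * K)
      rw [hik] at hdecay
      have hKle : (1 - q) ^ (((i' : ℕ) - (i : ℕ)) * K) ≤ (1 - q) ^ K := by
        apply pow_le_pow_of_le_one h1q (by linarith [hqpos])
        have : 1 ≤ (i' : ℕ) - (i : ℕ) := by
          have : (i : ℕ) < (i' : ℕ) := hlt
          omega
        calc K = 1 * K := (one_mul K).symm
          _ ≤ ((i' : ℕ) - (i : ℕ)) * K := Nat.mul_le_mul_right K this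
      -- the term bound
      have hterm : sd (J i) * x ((i' : ℕ) * K) (J i) ≤ c ⬝ᵥ x ((i' : ℕ) * K) - zstar := by
        rw [hgapeq (x ((i' : ℕ) * K)) (hBFS _).2.1, dotProduct]
        apply Finset.single_le_sum (f := fun j => sd j * x ((i' : ℕ) * K) j)
          (fun j _ => mul_nonneg (hsd0 j) ((hBFS _).2.2 j)) (Finset.mem_univ (J i))
      have hg2 : c ⬝ᵥ x ((i' : ℕ) * K) - zstar
          ≤ (1 - q) ^ K * (c ⬝ᵥ x ((i : ℕ) * K) - zstar) := by
        refine le_trans hdecay ?_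
        exact mul_le_mul_of_nonneg_right hKle (by linarith [hgp i])
      have hg3 : (1 - q) ^ K * (c ⬝ᵥ x ((i : ℕ) * K) - zstar)
          ≤ (1 - q) ^ K * (((m : ℝ) * γ) * sd (J i)) :=
        mul_le_mul_of_nonneg_left (hJle i) (pow_nonneg h1q K)
      have hg4 : (1 - q) ^ K * (((m : ℝ) * γ) * sd (J i)) < δ * sd (J i) := by
        have := hsdpos i
        nlinarith [hKpow]
      have hxlt : x ((i' : ℕ) * K) (J i) < δ := by
        have h5 : sd (J i) * x ((i' : ℕ) * K) (J i) < sd (J i) * δ := by nlinarith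
        exact lt_of_mul_lt_mul_left h5 (hsdpos i).le
      have hxge : δ ≤ x ((i' : ℕ) * K) (J i') :=
        (hδγ (x ((i' : ℕ) * K)) (hBFS _) (J i') (hJpos i')).1
      rw [← hJeq] at hxge
      linarith
    have hinj : Function.Injective J := by
      intro i i' h
      rcases lt_trichotomy i i' with hl | hl | hl
      · exact absurd h (hmain i i' hl)
      · exact hl
      · exact absurd h.symm (hmain i' i hl)
    -- complementary slackness
    obtain ⟨vstar, hvstarBFS, hvstarval⟩ := hzatt
    have hsv0 : sd ⬝ᵥ vstar = 0 := by
      rw [← hgapeq vstar hvstarBFS.2.1, hvstarval]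
      ring
    have hsv : ∀ j, sd j * vstar j = 0 := by
      have := (Finset.sum_eq_zero_iff_of_nonneg
        (fun j _ => mul_nonneg (hsd0 j) (hvstarBFS.2.2 j))).mp hsv0
      exact fun j => this j (Finset.mem_univ j)
    have hJzero : ∀ i, vstar (J i) = 0 := by
      intro i
      rcases mul_eq_zero.mp (hsv (J i)) with h | h
      · exact absurd h (hsdpos i).ne'
      · exact h
    -- counting
    have himg : Finset.univ.image J ⊆ Finset.univ.filter (fun j => ¬ 0 < vstar j) := by
      intro j hj
      obtain ⟨i, _, rfl⟩ := Finset.mem_image.mp hj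
      rw [Finset.mem_filter]
      exact ⟨Finset.mem_univ _, by rw [hJzero i]; exact lt_irrefl 0⟩
    have hcard1 : (Finset.univ.image J).card = n - m + 1 := by
      rw [Finset.card_image_of_injective _ hinj, Finset.card_univ, Fintype.card_fin]
    have hcard2 : (Finset.univ.filter fun j => ¬ 0 < vstar j).card = n - m := by
      have h1 := Finset.card_filter_add_card_filter_not
        (s := (Finset.univ : Finset (Fin n))) (p := fun j => 0 < vstar j)
      have h2 := hnd vstar hvstarBFS
      beta_reduce at h1
      rw [Finset.card_univ, Fintype.card_fin] at h1
      omega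
    have := Finset.card_le_card himg
    rw [hcard1, hcard2] at this
    omega
  -- conclusion
  rcases le_total N1 N2 with h | h
  · exact ⟨N1, by rw [min_eq_left h], hN1⟩
  · exact ⟨N2, by rw [min_eq_right h], hN2⟩
end

section
/- Let x^t be a basic feasible solution with basis B^t and reduced costs c̄_N, and suppose the largest distance rule is applicable (some c̄_j < 0 for j ∈ N). If the pivot with entering variable j_l produces a new feasible solution x^{t+1} ≠ x^t, then c^⊤x^t − c^⊤x^{t+1} = (−c̄_{j_l}) · x^{t+1}_{j_l} ≥ (−c̄_{j_l}) · δ, where δ is the minimum positive component over all basic feasible solutions. -/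
open Matrix

/-- A largest-distance pivot from BFS `x` (basis `bas`, reduced costs
`c̄_j = c_j − (Aᵀ y)_j`, entering index `jl` with `c̄_{jl} < 0` minimizing
`c̄_j/‖a_j‖`) that produces a new feasible solution `x' ≠ x` decreases the objective by
`(−c̄_{jl}) · x'_{jl} ≥ (−c̄_{jl}) · δ`, where `δ` is the minimum positive component
over all basic feasible solutions. -/
theorem pivot_objective_decrease {m n : ℕ} (hm : 0 < m)
    (A : Matrix (Fin m) (Fin n) ℝ) (b : Fin m → ℝ) (c : Fin n → ℝ)
    (bas : Fin m → Fin n) (hbas : IsBasis A bas)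
    (x : Fin n → ℝ)
    (hxzero : ∀ j, j ∉ Set.range bas → x j = 0)
    (hxfeas : A *ᵥ x = b) (hx0 : 0 ≤ x)
    (y : Fin m → ℝ)
    (hy : (A.submatrix id bas)ᵀ *ᵥ y = fun i => c (bas i))
    (jl : Fin n) (hjl : jl ∉ Set.range bas)
    (hneg : c jl - (Aᵀ *ᵥ y) jl < 0)
    (hmin : ∀ j, j ∉ Set.range bas →
      (c jl - (Aᵀ *ᵥ y) jl) / colNorm A jl ≤ (c j - (Aᵀ *ᵥ y) j) / colNorm A j)
    (x' : Fin n → ℝ)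
    (hx'feas : A *ᵥ x' = b) (hx'0 : 0 ≤ x')
    (hx'zero : ∀ j, j ∉ Set.range bas → j ≠ jl → x' j = 0)
    (hx'bfs : IsBasicFeasible A b x')
    (hne : x' ≠ x)
    (δ : ℝ) (hδ : 0 < δ)
    (hδmin : ∀ v, IsBasicFeasible A b v → ∀ j, 0 < v j → δ ≤ v j) :
    c ⬝ᵥ x - c ⬝ᵥ x' = (-(c jl - (Aᵀ *ᵥ y) jl)) * x' jl ∧
      c ⬝ᵥ x - c ⬝ᵥ x' ≥ (-(c jl - (Aᵀ *ᵥ y) jl)) * δ := by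
  set cb : Fin n → ℝ := fun j => c j - (Aᵀ *ᵥ y) j with hcb
  have hcbas : ∀ i, cb (bas i) = 0 := by
    intro i
    have h := congrFun hy i
    simp only [Matrix.mulVec, dotProduct, Matrix.transpose_apply, Matrix.submatrix_apply,
      id] at h
    simp only [hcb, Matrix.mulVec, dotProduct, Matrix.transpose_apply, h, sub_self]
  have hsupp : ∀ j, j ∉ Set.range bas → j ≠ jl → cb j * x' j = 0 := fun j h1 h2 => by
    rw [hx'zero j h1 h2, mul_zero]
  -- decomposition c ⬝ᵥ v = y ⬝ᵥ b + cb ⬝ᵥ v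
  have hdec : ∀ v : Fin n → ℝ, A *ᵥ v = b → c ⬝ᵥ v = y ⬝ᵥ b + cb ⬝ᵥ v := by
    intro v hv
    have : (Aᵀ *ᵥ y) ⬝ᵥ v = y ⬝ᵥ (A *ᵥ v) := by
      rw [Matrix.mulVec_transpose, ← Matrix.dotProduct_mulVec]
    rw [← hv, ← this]
    simp only [hcb, dotProduct]
    rw [← Finset.sum_add_distrib]
    exact Finset.sum_congr rfl fun j _ => by ring
  have hzero : ∀ v : Fin n → ℝ, (∀ j, j ∉ Set.range bas → v j = 0) → cb ⬝ᵥ v = 0 := by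
    intro v hv
    apply Finset.sum_eq_zero
    intro j _
    by_cases h : j ∈ Set.range bas
    · obtain ⟨i, rfl⟩ := h
      rw [hcbas i, zero_mul]
    · rw [hv j h, mul_zero]
  have hcbx' : cb ⬝ᵥ x' = cb jl * x' jl := by
    apply Finset.sum_eq_single jl
    · intro j _ hj
      by_cases h : j ∈ Set.range bas
      · obtain ⟨i, rfl⟩ := h; rw [hcbas i, zero_mul]
      · rw [hx'zero j h hj, mul_zero]
    · intro h; exact absurd (Finset.mem_univ jl) h
  have hmain : c ⬝ᵥ x - c ⬝ᵥ x' = (-(c jl - (Aᵀ *ᵥ y) jl)) * x' jl := by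
    rw [hdec x hxfeas, hdec x' hx'feas, hzero x hxzero, hcbx']
    simp [hcb]; ring
  refine ⟨hmain, ?_⟩
  -- show x' jl > 0
  have hxjl : 0 < x' jl := by
    rcases lt_or_eq_of_le (hx'0 jl) with h | h
    · exact h
    · exfalso
      apply hne
      -- x' = x : both solve A_B u = b with support in basis
      have hBinj : Function.Injective ((A.submatrix id bas).mulVec) :=
        Matrix.mulVec_injective_iff_isUnit.2 hbas.2
      have key : ∀ v : Fin n → ℝ, (∀ j, j ∉ Set.range bas → v j = 0) →
          A *ᵥ v = (A.submatrix id bas) *ᵥ (v ∘ bas) := by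
        intro v hv
        funext i
        simp only [Matrix.mulVec, dotProduct, Matrix.submatrix_apply, id, Function.comp]
        rw [← Finset.sum_image (g := bas) (f := fun j => A i j * v j)
          (fun a _ b _ hab => hbas.1 hab)]
        symm
        apply Finset.sum_subset (Finset.subset_univ _)
        intro j _ hj
        rw [hv j, mul_zero]
        rintro ⟨i', rfl⟩
        exact hj (Finset.mem_image_of_mem bas (Finset.mem_univ i'))
      have hx'z : ∀ j, j ∉ Set.range bas → x' j = 0 := by
        intro j hjr
        by_cases hje : j = jl
        · rw [hje, ← h]; rfl
        · exact hx'zero j hjr hje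
      have heq : x' ∘ bas = x ∘ bas := by
        apply hBinj
        rw [← key x' hx'z, ← key x hxzero, hxfeas, hx'feas]
      funext j
      by_cases hjr : j ∈ Set.range bas
      · obtain ⟨i, rfl⟩ := hjr
        exact congrFun heq i
      · rw [hx'z j hjr, hxzero j hjr]
  have hδle : δ ≤ x' jl := hδmin x' hx'bfs jl hxjl
  rw [hmain]
  exact mul_le_mul_of_nonneg_left hδle (by linarith)
end
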